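/- arXiv:1207.0705 — 8 statements merged into one kernel-verified Lean document; each statement's English description precedes it below -/
import Mathlib

section
/- There exist a constant c > 0 and n₀ ∈ ℕ such that for all n ≥ n₀ and every positive integer N with N < 2^(2^(c·n)), the sequence (1, 2, …, N) of integers has no n-term subsequence on which Φ₁, Φ₂, or Φ₃ holds everywhere; consequently the Erdős–Szekeres Ramsey function of the set {Φ₁,Φ₂,Φ₃} is at least 2^(2^(c·n)). -/
/-- A `k`-ary predicate `Φ` holds everywhere on a sequence `a` of reals if it holds
on every increasing `k`-tuple of terms of `a`. -/
def HoldsEverywhere {k n : ℕ} (Φ : (Fin k → ℝ) → Prop) (a : Fin n → ℝ) : Prop :=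
  ∀ i : Fin k → Fin n, StrictMono i → Φ (fun j => a (i j))

/-- The cross-ratio of four real numbers. -/
noncomputable def crossRatio (z₁ z₂ z₃ z₄ : ℝ) : ℝ :=
  ((z₁ - z₃) * (z₂ - z₄)) / ((z₂ - z₃) * (z₁ - z₄))

/-- `Φ₁(x₁,x₂) := x₁ = x₂`. -/
def Phi1 (x : Fin 2 → ℝ) : Prop := x 0 = x 1

/-- `Φ₂(x₁,…,x₅)`: the five terms are pairwise distinct, `(x₁,x₂;x₃,x₄)² ≥ 4`, and
`(x₁,x₂;x₃,x₅)² ≥ (x₁,x₂;x₃,x₄)⁴`. -/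
def Phi2 (x : Fin 5 → ℝ) : Prop :=
  Function.Injective x ∧
  (4 : ℝ) ≤ (crossRatio (x 0) (x 1) (x 2) (x 3)) ^ 2 ∧
  (crossRatio (x 0) (x 1) (x 2) (x 3)) ^ 4 ≤ (crossRatio (x 0) (x 1) (x 2) (x 4)) ^ 2

/-- `Φ₃(x₁,…,x₅) := Φ₂(x₅,x₄,x₃,x₂,x₁)`. -/
def Phi3 (x : Fin 5 → ℝ) : Prop := Phi2 (fun i => x i.rev)

lemma crossRatio_neg (z₁ z₂ z₃ z₄ : ℝ) :
    crossRatio (-z₁) (-z₂) (-z₃) (-z₄) = crossRatio z₁ z₂ z₃ z₄ := by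
  unfold crossRatio
  have h1 : (-z₁ - -z₃) * (-z₂ - -z₄) = (z₁ - z₃) * (z₂ - z₄) := by ring
  have h2 : (-z₂ - -z₃) * (-z₁ - -z₄) = (z₂ - z₃) * (z₁ - z₄) := by ring
  rw [h1, h2]

lemma phi2_neg {x : Fin 5 → ℝ} (h : Phi2 x) : Phi2 (fun j => -(x j)) := by
  refine ⟨fun a b hab => h.1 (neg_injective hab), ?_, ?_⟩
  · show (4:ℝ) ≤ (crossRatio (-x 0) (-x 1) (-x 2) (-x 3)) ^ 2
    rw [crossRatio_neg]; exact h.2.1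
  · show (crossRatio (-x 0) (-x 1) (-x 2) (-x 3)) ^ 4 ≤ (crossRatio (-x 0) (-x 1) (-x 2) (-x 4)) ^ 2
    rw [crossRatio_neg, crossRatio_neg]; exact h.2.2

lemma sm5 {n : ℕ} (v : Fin 5 → Fin n) (h01 : v 0 < v 1) (h12 : v 1 < v 2)
    (h23 : v 2 < v 3) (h34 : v 3 < v 4) : StrictMono v := by
  intro a b hab
  fin_cases a <;> fin_cases b <;> simp_all <;> omega

lemma crossRatio_le (u v w z R : ℝ) (h1 : u + 1 ≤ v) (h2 : v + 1 ≤ w) (h3 : w + 1 ≤ z)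
    (hR : w - u ≤ R) : crossRatio u v w z ≤ R := by
  unfold crossRatio
  have hden : 0 < (v - w) * (u - z) := by nlinarith
  rw [div_le_iff₀ hden]
  nlinarith [mul_nonneg (by linarith : (0:ℝ) ≤ R - (w-u)) (by linarith : (0:ℝ) ≤ z - v),
    mul_nonneg (by linarith : (0:ℝ) ≤ R) (by linarith : (0:ℝ) ≤ v - u),
    mul_nonneg (mul_nonneg (by linarith : (0:ℝ) ≤ R) (by linarith : (0:ℝ) ≤ z - u))
      (by linarith : (0:ℝ) ≤ w - v - 1)]

lemma crossRatio_nonneg (u v w z : ℝ) (h1 : u + 1 ≤ v) (h2 : v + 1 ≤ w) (h3 : w + 1 ≤ z) :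
    0 ≤ crossRatio u v w z := by
  unfold crossRatio
  apply div_nonneg <;> nlinarith

lemma core {n : ℕ} (hn : 8 ≤ n) (a : Fin n → ℝ) (R : ℝ)
    (gap : ∀ i j : Fin n, i < j → a i + 1 ≤ a j)
    (hub : ∀ i j : Fin n, a j - a i ≤ R)
    (h : HoldsEverywhere Phi2 a) : (2:ℝ) ^ (2 ^ (n - 4)) ≤ R := by
  have key : ∀ j : ℕ, ∀ hj : 3 + j < n,
      (4:ℝ) ^ (2 ^ j) ≤ (crossRatio (a ⟨0, by omega⟩) (a ⟨1, by omega⟩)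
        (a ⟨2, by omega⟩) (a ⟨3 + j, hj⟩)) ^ 2 := by
    intro j
    induction j with
    | zero =>
      intro hj
      have hp := h ![⟨0, by omega⟩, ⟨1, by omega⟩, ⟨2, by omega⟩, ⟨3 + 0, hj⟩, ⟨4, by omega⟩]
        (by refine sm5 _ ?_ ?_ ?_ ?_ <;> simp [Fin.mk_lt_mk] <;> omega)
      obtain ⟨-, h1, -⟩ := hp
      simp only [Matrix.cons_val_zero, Matrix.cons_val_one, Matrix.head_cons,
        Matrix.cons_val_two, Matrix.tail_cons, Matrix.cons_val_three] at h1
      simpa using h1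
    | succ j ih =>
      intro hj
      have hj' : 3 + j < n := by omega
      have hp := h ![⟨0, by omega⟩, ⟨1, by omega⟩, ⟨2, by omega⟩, ⟨3 + j, hj'⟩, ⟨3 + (j+1), hj⟩]
        (by refine sm5 _ ?_ ?_ ?_ ?_ <;> simp [Fin.mk_lt_mk] <;> omega)
      obtain ⟨-, -, h2⟩ := hp
      simp only [Matrix.cons_val_zero, Matrix.cons_val_one, Matrix.head_cons,
        Matrix.cons_val_two, Matrix.tail_cons, Matrix.cons_val_three,
        Matrix.cons_val_four] at h2
      have ih' := ih hj'
      calc (4:ℝ) ^ (2 ^ (j+1)) = ((4:ℝ) ^ (2 ^ j)) ^ 2 := by rw [← pow_mul, pow_succ]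
        _ ≤ ((crossRatio (a ⟨0, by omega⟩) (a ⟨1, by omega⟩) (a ⟨2, by omega⟩)
              (a ⟨3 + j, hj'⟩)) ^ 2) ^ 2 := by
            apply pow_le_pow_left₀ (by positivity) ih'
        _ = (crossRatio (a ⟨0, by omega⟩) (a ⟨1, by omega⟩) (a ⟨2, by omega⟩)
              (a ⟨3 + j, hj'⟩)) ^ 4 := by ring
        _ ≤ _ := h2
  have hkey := key (n - 4) (by omega)
  set i0 : Fin n := ⟨0, by omega⟩
  set i1 : Fin n := ⟨1, by omega⟩
  set i2 : Fin n := ⟨2, by omega⟩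
  set i3 : Fin n := ⟨3 + (n - 4), by omega⟩
  have g01 : a i0 + 1 ≤ a i1 := gap _ _ (by simp [i0, i1, Fin.mk_lt_mk])
  have g12 : a i1 + 1 ≤ a i2 := gap _ _ (by simp [i1, i2, Fin.mk_lt_mk])
  have g23 : a i2 + 1 ≤ a i3 := gap _ _ (by simp only [i2, i3, Fin.mk_lt_mk]; omega)
  have hcrR : crossRatio (a i0) (a i1) (a i2) (a i3) ≤ R :=
    crossRatio_le _ _ _ _ _ g01 g12 g23 (hub i0 i2)
  have hcr0 : 0 ≤ crossRatio (a i0) (a i1) (a i2) (a i3) :=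
    crossRatio_nonneg _ _ _ _ g01 g12 g23
  have hR2 : (4:ℝ) ^ (2 ^ (n - 4)) ≤ R ^ 2 :=
    le_trans hkey (pow_le_pow_left₀ hcr0 hcrR 2)
  have hR0 : 0 ≤ R := by have := hub i0 i0; linarith
  by_contra hc
  push_neg at hc
  have h1 : R ^ 2 < ((2:ℝ) ^ (2 ^ (n - 4))) ^ 2 :=
    pow_lt_pow_left₀ hc hR0 two_ne_zero
  have h2 : ((2:ℝ) ^ (2 ^ (n - 4))) ^ 2 = (4:ℝ) ^ (2 ^ (n - 4)) := by
    rw [← pow_mul, mul_comm, pow_mul]; norm_num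
  linarith

/-- there are `c > 0` and `n₀` such that for `n ≥ n₀` and `N < 2^(2^(c·n))`,
the sequence `(1, 2, …, N)` has no `n`-term subsequence on which `Φ₁`, `Φ₂`, or `Φ₃`
holds everywhere; hence `ES_{Φ₁,Φ₂,Φ₃}(n) ≥ 2^(2^(c·n))`. -/
theorem stmt3 :
    ∃ c : ℝ, 0 < c ∧ ∃ n₀ : ℕ, ∀ n : ℕ, n₀ ≤ n → ∀ N : ℕ, 0 < N →
      (N : ℝ) < (2 : ℝ) ^ ((2 : ℝ) ^ (c * (n : ℝ))) →
      ¬ ∃ φ : Fin n → Fin N, StrictMono φ ∧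
          (HoldsEverywhere Phi1 (fun j => ((φ j : ℕ) : ℝ) + 1) ∨
           HoldsEverywhere Phi2 (fun j => ((φ j : ℕ) : ℝ) + 1) ∨
           HoldsEverywhere Phi3 (fun j => ((φ j : ℕ) : ℝ) + 1)) := by
  refine ⟨1/2, by norm_num, 8, fun n hn N hN hlt => ?_⟩
  rintro ⟨φ, hφ, hcase⟩
  set a : Fin n → ℝ := fun j => ((φ j : ℕ) : ℝ) + 1 with ha
  have gap : ∀ i j : Fin n, i < j → a i + 1 ≤ a j := by
    intro i j hij
    have h1 : (φ i : ℕ) < (φ j : ℕ) := hφ hij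
    have h2 : ((φ i : ℕ) : ℝ) + 1 ≤ ((φ j : ℕ) : ℝ) := by exact_mod_cast h1
    simp only [ha]; linarith
  have hub : ∀ i j : Fin n, a j - a i ≤ (N : ℝ) := by
    intro i j
    have h1 : ((φ j : ℕ) : ℝ) < N := by exact_mod_cast (φ j).isLt
    have h2 : (0:ℝ) ≤ ((φ i : ℕ) : ℝ) := by positivity
    simp only [ha]; linarith
  -- in all three cases we derive the doubly-exponential lower bound
  have hbig : (2:ℝ) ^ (2 ^ (n - 4)) ≤ (N : ℝ) := by
    rcases hcase with h1 | h2 | h3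
    · -- Phi1 contradicts strict monotonicity
      exfalso
      have hp := h1 ![⟨0, by omega⟩, ⟨1, by omega⟩]
        (by intro x y hxy; fin_cases x <;> fin_cases y <;> simp_all [Fin.mk_lt_mk])
      have := gap ⟨0, by omega⟩ ⟨1, by omega⟩ (by simp [Fin.mk_lt_mk])
      simp only [Phi1, Matrix.cons_val_zero, Matrix.cons_val_one, Matrix.head_cons] at hp
      rw [hp] at this
      linarith
    · exact core hn a N gap hub h2
    · -- reduce Phi3 to Phi2 on b j = -(a j.rev)
      set b : Fin n → ℝ := fun j => -(a j.rev) with hb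
      have gapb : ∀ i j : Fin n, i < j → b i + 1 ≤ b j := by
        intro i j hij
        have := gap j.rev i.rev (Fin.rev_lt_rev.mpr hij)
        simp only [hb]; linarith
      have hubb : ∀ i j : Fin n, b j - b i ≤ (N : ℝ) := by
        intro i j
        have := hub j.rev i.rev
        simp only [hb]; linarith
      have hb2 : HoldsEverywhere Phi2 b := by
        intro i hi
        have hi' : StrictMono (fun j : Fin 5 => (i j.rev).rev) := by
          intro x y hxy
          exact Fin.rev_lt_rev.mpr (hi (Fin.rev_lt_rev.mpr hxy))
        have hp := h3 (fun j => (i j.rev).rev) hi'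
        unfold Phi3 at hp
        simp only [Fin.rev_rev] at hp
        exact phi2_neg hp
      exact core hn b N gapb hubb hb2
  -- final numeric contradiction
  have hmono : (2:ℝ) ^ ((2:ℝ) ^ ((1/2 : ℝ) * (n:ℝ))) ≤ (2:ℝ) ^ (2 ^ (n - 4)) := by
    rw [show ((2:ℝ) ^ (2 ^ (n - 4) : ℕ)) = (2:ℝ) ^ ((2 ^ (n - 4) : ℕ) : ℝ) by
      rw [Real.rpow_natCast]]
    apply Real.rpow_le_rpow_of_exponent_le one_le_two
    have e1 : ((2 ^ (n - 4) : ℕ) : ℝ) = (2:ℝ) ^ (((n - 4 : ℕ)) : ℝ) := by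
      rw [Real.rpow_natCast]; push_cast; ring
    rw [e1]
    apply Real.rpow_le_rpow_of_exponent_le one_le_two
    have h4 : (4:ℕ) ≤ n := by omega
    have e2 : ((n - 4 : ℕ) : ℝ) = (n : ℝ) - 4 := by
      push_cast [h4]; ring
    rw [e2]
    have : (8:ℝ) ≤ (n:ℝ) := by exact_mod_cast hn
    linarith
  linarith
end

section
/- Effective compactness for algebraic predicates: for all positive integers d, D, k there exists N such that for every set P of real polynomials in the d·k coordinates of k points of ℝ^d, each polynomial of total degree at most D, the following are equivalent: (i) there exists a sequence (a₁,…,a_N) of N points of ℝ^d such that p(a_{i₁},…,a_{i_k}) = 0 for every p ∈ P and all indices 1 ≤ i₁ < ⋯ < i_k ≤ N; (ii) there exists an infinite sequence a : ℕ → ℝ^d such that p(a_{i₁},…,a_{i_k}) = 0 for every p ∈ P and all indices i₁ < i₂ < ⋯ < i_k. -/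
/-!
Given the finite sequence `a`, let `L j s` be the span of the functions obtained from the
predicates by substituting `a t₀, …, a t_{s-1}` with `t₀ < ⋯ < t_{s-1} ≤ j` for the first `s` points. All of them lie in the
space of polynomial functions of degree at most `D`, of some finite dimension `M`, and they grow
with `j`; so some `j ≤ (k + 1) M` has `L (j + 1) s = L j s` for every `s ≤ k`. By downward
induction on `s`, every member of `L j s` vanishes at the constant tuple `(a (j + 1), …)`:
substituting `a (j + 1)` for the next point lands in `L (j + 1) (s + 1) = L j (s + 1)`, and for
`s = k` this is the hypothesis on `a`. Hence `a 0, …, a j, a (j + 1), a (j + 1), …` works.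
-/

open MvPolynomial Module

def splice {X : Type*} {k : ℕ} (s : ℕ) (y x : Fin k → X) : Fin k → X :=
  fun l => if (l : ℕ) < s then y l else x l

lemma splice_of_le {X : Type*} {k s : ℕ} (hs : k ≤ s) (y x : Fin k → X) : splice s y x = y :=
  funext fun l => if_pos (l.2.trans_le hs)

theorem exists_le_map_succ_eq_of_monotone {f : ℕ → ℕ} (hf : Monotone f) {n : ℕ}
    (hn : ∀ j, f j ≤ n) : ∃ j ≤ n, f (j + 1) = f j := by
  by_contra! h
  have hgrowth : ∀ j ≤ n + 1, j ≤ f j := by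
    intro j hj
    induction j with
    | zero => exact Nat.zero_le _
    | succ j ih =>
      have := lt_of_le_of_ne (hf (Nat.le_add_right j 1)) (h j (by omega)).symm
      have := ih (by omega)
      omega
  have := hgrowth (n + 1) le_rfl
  have := hn (n + 1)
  omega

theorem Submodule.exists_le_forall_succ_eq_of_monotone {K E ι : Type*} [Field K]
    [AddCommGroup E] [Module K E] (V : Submodule K E) [FiniteDimensional K V]
    (L : ℕ → ι → Submodule K E) (hL : ∀ i, Monotone (L · i)) (hLV : ∀ j i, L j i ≤ V)
    (I : Finset ι) : ∃ j ≤ I.card * finrank K V, ∀ i ∈ I, L (j + 1) i = L j i := by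
  have : ∀ j i, FiniteDimensional K (L j i) := fun j i =>
    Submodule.finiteDimensional_of_le (hLV j i)
  obtain ⟨j, hj, hsum⟩ := exists_le_map_succ_eq_of_monotone
    (f := fun j => ∑ i ∈ I, finrank K (L j i))
    (fun j j' h => Finset.sum_le_sum fun i _ => Submodule.finrank_mono (hL i h))
    (fun j => (Finset.sum_le_sum fun i _ => Submodule.finrank_mono (hLV j i)).trans_eq
      (by rw [Finset.sum_const, smul_eq_mul]))
  refine ⟨j, hj, fun i hi => (Submodule.eq_of_le_of_finrank_eq (hL i j.le_succ) ?_).symm⟩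
  exact (Finset.sum_eq_sum_iff_of_le
    (fun i _ => Submodule.finrank_mono (hL i j.le_succ))).1 hsum.symm i hi

theorem exists_lt_iff_le_of_monotone {k : ℕ} {i : Fin k → ℕ} (hi : Monotone i) (j : ℕ) :
    ∃ s ≤ k, ∀ l : Fin k, (l : ℕ) < s ↔ i l ≤ j := by
  classical
  have hex : ∃ s : ℕ, ∀ l : Fin k, s ≤ (l : ℕ) → j < i l := ⟨k, fun l hl => absurd l.2 (by omega)⟩
  refine ⟨Nat.find hex, Nat.find_min' hex fun l hl => absurd l.2 (by omega), fun l => ⟨?_, ?_⟩⟩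
  · intro hl
    by_contra! hjl
    exact (Nat.find_min' hex fun l' hl' => hjl.trans_le (hi hl')).not_gt hl
  · intro hl
    by_contra! hsl
    exact (Nat.find_spec hex l hsl).not_ge hl

section PrefixSubstitution

variable {R X : Type*} {k : ℕ}

def prefixSubstitutions (S : Set ((Fin k → X) → R)) (a : ℕ → X) (j s : ℕ) :
    Set ((Fin k → X) → R) :=
  {g | ∃ f ∈ S, ∃ t : Fin k → ℕ, StrictMono t ∧ (∀ l : Fin k, (l : ℕ) < s → t l ≤ j) ∧
    g = fun x => f (splice s (a ∘ t) x)}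

variable {S : Set ((Fin k → X) → R)} {a : ℕ → X}

lemma prefixSubstitutions_mono {j j' : ℕ} (h : j ≤ j') (s : ℕ) :
    prefixSubstitutions S a j s ⊆ prefixSubstitutions S a j' s := by
  rintro g ⟨f, hf, t, ht, htj, rfl⟩
  exact ⟨f, hf, t, ht, fun l hl => (htj l hl).trans h, rfl⟩

lemma exists_strictMono_splice_succ_eq {t : Fin k → ℕ} (ht : StrictMono t) {j s : ℕ}
    (htj : ∀ l : Fin k, (l : ℕ) < s → t l ≤ j) :
    ∃ t' : Fin k → ℕ, StrictMono t' ∧ (∀ l : Fin k, (l : ℕ) < s + 1 → t' l ≤ j + 1) ∧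
      splice (s + 1) (a ∘ t') (fun _ => a (j + 1)) = splice s (a ∘ t) (fun _ => a (j + 1)) := by
  refine ⟨fun l => if (l : ℕ) < s then t l else j + 1 + (l - s), ?_, ?_, ?_⟩
  · intro l l' hll'
    have : (l : ℕ) < l' := hll'
    dsimp only
    split_ifs with h h' h'
    · exact ht hll'
    · have := htj l h; omega
    · omega
    · omega
  · intro l hl
    dsimp only
    split_ifs with h
    · exact (htj l h).trans j.le_succ
    · omega
  · funext l
    simp only [splice, Function.comp_apply]
    split_ifs <;> first | rfl | (congr 1; omega)

end PrefixSubstitution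

section StableSpans

variable {X K : Type*} [Field K] {k : ℕ} {S : Set ((Fin k → X) → K)} {a : ℕ → X}

open Submodule

lemma span_prefixSubstitutions_le_ker {j : ℕ}
    (ha : ∀ f ∈ S, ∀ t : Fin k → ℕ, StrictMono t → (∀ l, t l ≤ j) → f (a ∘ t) = 0)
    (hstab : ∀ s < k, span K (prefixSubstitutions S a (j + 1) (s + 1)) ≤
      span K (prefixSubstitutions S a j (s + 1)))
    {s : ℕ} (hs : s ≤ k) :
    span K (prefixSubstitutions S a j s) ≤ LinearMap.ker (LinearMap.proj fun _ => a (j + 1)) := by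
  induction hs using Nat.decreasingInduction with
  | self =>
    rw [span_le]
    rintro _ ⟨f, hf, t, ht, htj, rfl⟩
    simpa [splice_of_le le_rfl] using ha f hf t ht fun l => htj l l.2
  | of_succ s hs ih =>
    rw [span_le]
    rintro _ ⟨f, hf, t, ht, htj, rfl⟩
    obtain ⟨t', ht', ht'j, hsplice⟩ := exists_strictMono_splice_succ_eq (a := a) ht htj
    have hmem := ih (hstab s hs (subset_span ⟨f, hf, t', ht', ht'j, rfl⟩))
    simpa [hsplice] using hmem

theorem forall_strictMono_eq_zero_of_stable {j : ℕ}
    (ha : ∀ f ∈ S, ∀ t : Fin k → ℕ, StrictMono t → (∀ l, t l ≤ j) → f (a ∘ t) = 0)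
    (hstab : ∀ s < k, span K (prefixSubstitutions S a (j + 1) (s + 1)) ≤
      span K (prefixSubstitutions S a j (s + 1))) :
    ∀ f ∈ S, ∀ i : Fin k → ℕ, StrictMono i → f ((fun n => a (min n (j + 1))) ∘ i) = 0 := by
  intro f hf i hi
  obtain ⟨s, hsk, hs⟩ := exists_lt_iff_le_of_monotone hi.monotone j
  have hsplice : (fun n => a (min n (j + 1))) ∘ i = splice s (a ∘ i) (fun _ => a (j + 1)) := by
    funext l
    by_cases h : i l ≤ j
    · simp [splice, (hs l).2 h, min_eq_left (h.trans j.le_succ)]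
    · simp [splice, mt (hs l).1 h, min_eq_right (Nat.succ_le_of_lt (not_le.1 h))]
  have := span_prefixSubstitutions_le_ker ha hstab hsk
    (subset_span ⟨f, hf, i, hi, fun l hl => (hs l).1 hl, rfl⟩)
  simpa [hsplice] using this

theorem exists_forall_strictMono_eq_zero (V : Submodule K ((Fin k → X) → K))
    [FiniteDimensional K V] (hSV : S ⊆ V)
    (hV : ∀ f ∈ V, ∀ s y, (fun x => f (splice s y x)) ∈ V)
    (ha : ∀ f ∈ S, ∀ t : Fin k → ℕ, StrictMono t → (∀ l, t l ≤ (k + 1) * finrank K V) →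
      f (a ∘ t) = 0) :
    ∃ b : ℕ → X, ∀ f ∈ S, ∀ i : Fin k → ℕ, StrictMono i → f (b ∘ i) = 0 := by
  obtain ⟨j, hj, hstab⟩ := Submodule.exists_le_forall_succ_eq_of_monotone V
    (fun j s => span K (prefixSubstitutions S a j s))
    (fun s => monotone_nat_of_le_succ fun j =>
      span_mono (prefixSubstitutions_mono j.le_succ s))
    (fun j s => span_le.2 <| by
      rintro _ ⟨f, hf, t, -, -, rfl⟩
      exact hV f (hSV hf) s _)
    (Finset.range (k + 1))
  rw [Finset.card_range] at hj
  exact ⟨_, forall_strictMono_eq_zero_of_stable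
    (fun f hf t ht htj => ha f hf t ht fun l => (htj l).trans hj)
    (fun s hs => (hstab (s + 1) (Finset.mem_range.2 (by omega))).le)⟩

end StableSpans

theorem MvPolynomial.totalDegree_bind₁_le {σ τ R : Type*} [CommSemiring R]
    {f : σ → MvPolynomial τ R} (hf : ∀ v, (f v).totalDegree ≤ 1) (p : MvPolynomial σ R) :
    (bind₁ f p).totalDegree ≤ p.totalDegree := by
  conv_lhs => rw [p.as_sum, map_sum]
  refine totalDegree_finsetSum_le fun m hm => ?_
  rw [bind₁_monomial]
  calc (C (coeff m p) * ∏ v ∈ m.support, f v ^ m v).totalDegree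
      ≤ ∑ v ∈ m.support, (f v ^ m v).totalDegree :=
        (totalDegree_mul _ _).trans <| by rw [totalDegree_C, zero_add]; exact totalDegree_finsetProd _ _
    _ ≤ ∑ v ∈ m.support, m v := Finset.sum_le_sum fun v _ =>
        (totalDegree_pow _ _).trans (by simpa using Nat.mul_le_mul_left (m v) (hf v))
    _ ≤ p.totalDegree := le_totalDegree hm

section PolynomialPredicates

variable {R : Type*} [CommSemiring R] {k d : ℕ}

noncomputable def evalPoints : MvPolynomial (Fin k × Fin d) R →ₗ[R] ((Fin k → Fin d → R) → R) :=
  LinearMap.pi fun x => (aeval fun v => x v.1 v.2).toLinearMap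

lemma evalPoints_apply (p : MvPolynomial (Fin k × Fin d) R) (x : Fin k → Fin d → R) :
    evalPoints p x = eval (fun v => x v.1 v.2) p := rfl

noncomputable def substPrefix (s : ℕ) (y : Fin k → Fin d → R) (v : Fin k × Fin d) :
    MvPolynomial (Fin k × Fin d) R :=
  if (v.1 : ℕ) < s then C (y v.1 v.2) else X v

lemma evalPoints_bind₁_substPrefix (s : ℕ) (y x : Fin k → Fin d → R)
    (p : MvPolynomial (Fin k × Fin d) R) :
    evalPoints (bind₁ (substPrefix s y) p) x = evalPoints p (splice s y x) := by
  simp only [evalPoints_apply, eval, eval₂Hom_bind₁]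
  congr 2
  funext v
  simp only [substPrefix, splice]
  split_ifs <;> simp

lemma totalDegree_substPrefix_le (s : ℕ) (y : Fin k → Fin d → R) (v : Fin k × Fin d) :
    (substPrefix s y v).totalDegree ≤ 1 := by
  unfold substPrefix
  split_ifs
  · simp
  · exact (totalDegree_monomial_le _ _).trans (by simp)

lemma splice_mem_map_restrictTotalDegree {D : ℕ} {f : (Fin k → Fin d → R) → R}
    (hf : f ∈ (restrictTotalDegree (Fin k × Fin d) R D).map evalPoints) (s : ℕ)
    (y : Fin k → Fin d → R) :
    (fun x => f (splice s y x)) ∈ (restrictTotalDegree (Fin k × Fin d) R D).map evalPoints := by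
  obtain ⟨p, hp, rfl⟩ := hf
  refine ⟨bind₁ (substPrefix s y) p, ?_, funext fun x => evalPoints_bind₁_substPrefix s y x p⟩
  rw [SetLike.mem_coe, mem_restrictTotalDegree] at hp ⊢
  exact (totalDegree_bind₁_le (totalDegree_substPrefix_le s y) p).trans hp

end PolynomialPredicates

theorem stmt4_general (d D k : ℕ) :
    ∃ N : ℕ, ∀ P : Set (MvPolynomial (Fin k × Fin d) ℝ),
      (∀ p ∈ P, p.totalDegree ≤ D) →
      ((∃ a : Fin N → Fin d → ℝ, ∀ p ∈ P, ∀ i : Fin k → Fin N, StrictMono i →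
          MvPolynomial.eval (fun v => a (i v.1) v.2) p = 0) ↔
       (∃ a : ℕ → Fin d → ℝ, ∀ p ∈ P, ∀ i : Fin k → ℕ, StrictMono i →
          MvPolynomial.eval (fun v => a (i v.1) v.2) p = 0)) := by
  set V := (restrictTotalDegree (Fin k × Fin d) ℝ D).map (evalPoints (k := k) (d := d))
  refine ⟨(k + 1) * finrank ℝ V + 1, fun P hP => ⟨?_, ?_⟩⟩
  · rintro ⟨a, ha⟩
    obtain ⟨b, hb⟩ := exists_forall_strictMono_eq_zero (S := evalPoints '' P)
      (a := fun n => if h : n < (k + 1) * finrank ℝ V + 1 then a ⟨n, h⟩ else 0) V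
      (Set.image_mono fun p hp => (mem_restrictTotalDegree _ _ _).2 (hP p hp))
      (fun _ hf => splice_mem_map_restrictTotalDegree hf)
      (by
        rintro _ ⟨p, hp, rfl⟩ t ht htN
        have := ha p hp (fun l => ⟨t l, Nat.lt_succ_of_le (htN l)⟩) fun l l' h => ht h
        simpa [evalPoints_apply, htN] using this)
    exact ⟨b, fun p hp i hi => hb _ ⟨p, hp, rfl⟩ i hi⟩
  · rintro ⟨a, ha⟩
    exact ⟨fun n => a n, fun p hp i hi => ha p hp (fun l => i l) fun l l' h => hi h⟩

/-- effective compactness for algebraic predicates: for all positive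
`d, D, k` there is `N` such that for every set `P` of real polynomials in the `d·k`
coordinates of `k` points of `ℝ^d`, all of total degree at most `D`, an `N`-term
sequence on which all polynomials of `P` vanish on every increasing `k`-tuple exists
iff an infinite such sequence exists. A point of `ℝ^d` is a function `Fin d → ℝ`, and a
polynomial in the coordinates of `k` points has variable set `Fin k × Fin d`. -/
theorem stmt4 (d D k : ℕ) (hd : 0 < d) (hD : 0 < D) (hk : 0 < k) :
    ∃ N : ℕ, ∀ P : Set (MvPolynomial (Fin k × Fin d) ℝ),
      (∀ p ∈ P, p.totalDegree ≤ D) →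
      ((∃ a : Fin N → Fin d → ℝ, ∀ p ∈ P, ∀ i : Fin k → Fin N, StrictMono i →
          MvPolynomial.eval (fun v => a (i v.1) v.2) p = 0) ↔
       (∃ a : ℕ → Fin d → ℝ, ∀ p ∈ P, ∀ i : Fin k → ℕ, StrictMono i →
          MvPolynomial.eval (fun v => a (i v.1) v.2) p = 0)) :=
  stmt4_general d D k
end

section
/- For every nonzero polynomial p ∈ ℝ[x₁,…,x_k] there exists R > 2 such that for every R-growing sequence (a₁,…,aₙ) with n ≥ k and all indices 1 ≤ i₁ < ⋯ < i_k ≤ n, the sign of p(a_{i₁},…,a_{i_k}) equals the sign of the coefficient of the lexicographically largest monomial of p; in particular, either p is strictly positive on all such k-tuples of every R-growing sequence, or strictly negative on all of them, or zero on all of them. -/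
open Finset


/-- A sequence `b` is `R`-growing if `b₁ ≥ R` and `b_{i+1} ≥ b_i ^ R`
(real exponentiation). -/
def RGrowing (R : ℝ) {n : ℕ} (b : Fin n → ℝ) : Prop :=
  (∀ h : 0 < n, R ≤ b ⟨0, h⟩) ∧
  ∀ i : ℕ, ∀ h : i + 1 < n, b ⟨i, Nat.lt_of_succ_lt h⟩ ^ R ≤ b ⟨i + 1, h⟩

/-- `β` is lexicographically smaller than `α` in the order comparing the exponent
vectors read from the last variable to the first: there is a position `j` with
`β j < α j` and `β j' = α j'` for all later positions `j' > j`. -/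
def RevLexLt {k : ℕ} (β α : Fin k →₀ ℕ) : Prop :=
  ∃ j : Fin k, β j < α j ∧ ∀ j' : Fin k, j < j' → β j' = α j'

lemma auxA (d k : ℕ) (b : ℕ → ℝ) (hb1 : ∀ m, m < k → 1 ≤ b m)
    (hstep : ∀ m, m + 1 < k → b m ^ 2 ≤ b (m + 1)) :
    ∀ j, j < k → ∏ m ∈ Finset.range (j + 1), b m ^ d ≤ b j ^ (2 * d) := by
  intro j
  induction j with
  | zero =>
    intro hj
    simp only [zero_add, Finset.prod_range_one]
    exact pow_le_pow_right₀ (hb1 0 hj) (by omega)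
  | succ j ih =>
    intro hj
    rw [Finset.prod_range_succ]
    have h1 := ih (by omega)
    have hbj1 : 1 ≤ b (j + 1) := hb1 _ hj
    have hbj0 : (0:ℝ) ≤ b j := le_trans zero_le_one (hb1 j (by omega))
    calc (∏ m ∈ range (j + 1), b m ^ d) * b (j + 1) ^ d
        ≤ b j ^ (2 * d) * b (j + 1) ^ d :=
          mul_le_mul_of_nonneg_right h1 (by positivity)
      _ ≤ b (j + 1) ^ d * b (j + 1) ^ d := by
          apply mul_le_mul_of_nonneg_right _ (by positivity)
          rw [pow_mul]
          exact pow_le_pow_left₀ (by positivity) (hstep j hj) d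
      _ = b (j + 1) ^ (2 * d) := by rw [← pow_add]; ring_nf

lemma auxKey (d k : ℕ) (R T : ℝ) (b : ℕ → ℝ) (hT : T ≤ R) (hd : 2 * (d:ℝ) + 1 ≤ R)
    (h3 : (3:ℝ) ≤ R) (hbR : ∀ m, m < k → R ≤ b m)
    (hstep : ∀ m, m + 1 < k → b m ^ R ≤ b (m + 1)) :
    ∀ j, j < k → T * ∏ m ∈ Finset.range j, b m ^ d ≤ b j := by
  have hb1 : ∀ m, m < k → 1 ≤ b m := fun m hm => le_trans (by linarith) (hbR m hm)
  have hstep2 : ∀ m, m + 1 < k → b m ^ 2 ≤ b (m + 1) := by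
    intro m hm
    have h1 : 1 ≤ b m := hb1 m (by omega)
    calc b m ^ 2 = b m ^ ((2:ℕ):ℝ) := by rw [Real.rpow_natCast]
      _ ≤ b m ^ R := Real.rpow_le_rpow_of_exponent_le h1 (by push_cast; linarith)
      _ ≤ b (m + 1) := hstep m hm
  intro j hj
  match j with
  | 0 => simpa using le_trans hT (hbR 0 hj)
  | (j + 1) =>
    have hA := auxA d k b hb1 hstep2 j (by omega)
    have h1j : 1 ≤ b j := hb1 j (by omega)
    have hprod0 : (0:ℝ) ≤ ∏ m ∈ range (j + 1), b m ^ d :=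
      Finset.prod_nonneg fun m hm => pow_nonneg
        (le_trans zero_le_one (hb1 m (lt_of_lt_of_le (mem_range.mp hm) (by omega)))) _
    calc T * ∏ m ∈ range (j + 1), b m ^ d
        ≤ R * b j ^ (2 * d) := mul_le_mul hT hA hprod0 (by linarith)
      _ ≤ b j * b j ^ (2 * d) := mul_le_mul_of_nonneg_right (hbR j (by omega)) (by positivity)
      _ = b j ^ (2 * d + 1) := by ring
      _ = b j ^ ((2 * d + 1 : ℕ):ℝ) := by rw [Real.rpow_natCast]
      _ ≤ b j ^ R := Real.rpow_le_rpow_of_exponent_le h1j (by push_cast; linarith)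
      _ ≤ b (j + 1) := hstep j hj

lemma auxTerm (d k : ℕ) (R T : ℝ) (b : ℕ → ℝ) (β γ : ℕ → ℕ)
    (hT0 : 0 ≤ T) (hT : T ≤ R) (hd : 2 * (d:ℝ) + 1 ≤ R) (h3 : (3:ℝ) ≤ R)
    (hbR : ∀ m, m < k → R ≤ b m)
    (hstep : ∀ m, m + 1 < k → b m ^ R ≤ b (m + 1))
    (hβd : ∀ m, m < k → β m ≤ d)
    (j : ℕ) (hj : j < k) (hjlt : β j < γ j)
    (hjeq : ∀ m, j < m → m < k → β m = γ m) :
    T * ∏ m ∈ Finset.range k, b m ^ β m ≤ ∏ m ∈ Finset.range k, b m ^ γ m := by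
  have hb1 : ∀ m, m < k → 1 ≤ b m := fun m hm => le_trans (by linarith) (hbR m hm)
  have hb0 : ∀ m, m < k → (0:ℝ) ≤ b m := fun m hm => le_trans zero_le_one (hb1 m hm)
  have hsplitβ := Finset.prod_range_mul_prod_Ico (fun m => b m ^ β m) (show j + 1 ≤ k by omega)
  have hsplitγ := Finset.prod_range_mul_prod_Ico (fun m => b m ^ γ m) (show j + 1 ≤ k by omega)
  have htail : ∏ m ∈ Ico (j + 1) k, b m ^ β m = ∏ m ∈ Ico (j + 1) k, b m ^ γ m :=
    Finset.prod_congr rfl fun m hm => by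
      have hm' := mem_Ico.mp hm
      rw [hjeq m (by omega) (by omega)]
  have htail0 : (0:ℝ) ≤ ∏ m ∈ Ico (j + 1) k, b m ^ γ m :=
    Finset.prod_nonneg fun m hm => pow_nonneg (hb0 m (mem_Ico.mp hm).2) _
  have hhead : T * ∏ m ∈ range (j + 1), b m ^ β m ≤ ∏ m ∈ range (j + 1), b m ^ γ m := by
    rw [Finset.prod_range_succ, Finset.prod_range_succ]
    have hbj0 : (0:ℝ) ≤ b j := hb0 j hj
    have hbj1 : (1:ℝ) ≤ b j := hb1 j hj
    have h1 : ∏ m ∈ range j, b m ^ β m ≤ ∏ m ∈ range j, b m ^ d :=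
      Finset.prod_le_prod (fun m hm => pow_nonneg (hb0 m (by have := mem_range.mp hm; omega)) _)
        (fun m hm => pow_le_pow_right₀ (hb1 m (by have := mem_range.mp hm; omega))
          (hβd m (by have := mem_range.mp hm; omega)))
    have hkey := auxKey d k R T b hT hd h3 hbR hstep j hj
    have honeprod : (1:ℝ) ≤ ∏ m ∈ range j, b m ^ γ m :=
by
      rw [← Finset.prod_const_one (s := range j)]
      apply Finset.prod_le_prod (fun _ _ => zero_le_one)
      intro m hm
      have hmj := Finset.mem_range.mp hm
      exact one_le_pow₀ (hb1 m (by omega))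
    calc T * ((∏ m ∈ range j, b m ^ β m) * b j ^ β j)
        = (T * ∏ m ∈ range j, b m ^ β m) * b j ^ β j := by ring
      _ ≤ (T * ∏ m ∈ range j, b m ^ d) * b j ^ β j := by
          apply mul_le_mul_of_nonneg_right _ (by positivity)
          exact mul_le_mul_of_nonneg_left h1 hT0
      _ ≤ b j * b j ^ β j := mul_le_mul_of_nonneg_right hkey (by positivity)
      _ = b j ^ (β j + 1) := by ring
      _ ≤ b j ^ γ j := pow_le_pow_right₀ hbj1 (by omega)
      _ ≤ (∏ m ∈ range j, b m ^ γ m) * b j ^ γ j :=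
          le_mul_of_one_le_left (by positivity) honeprod
  calc T * ∏ m ∈ range k, b m ^ β m
      = (T * ∏ m ∈ range (j + 1), b m ^ β m) * ∏ m ∈ Ico (j + 1) k, b m ^ β m := by
        rw [mul_assoc, hsplitβ]
    _ ≤ (∏ m ∈ range (j + 1), b m ^ γ m) * ∏ m ∈ Ico (j + 1) k, b m ^ γ m := by
        rw [htail]
        exact mul_le_mul_of_nonneg_right hhead htail0
    _ = ∏ m ∈ range k, b m ^ γ m := hsplitγ

/-- for every nonzero polynomial `p ∈ ℝ[x₁,…,x_k]` with lexicographically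
largest monomial `α`, there is `R > 2` such that on every increasing `k`-tuple of terms
of any `R`-growing sequence, the sign of `p` equals the sign of the coefficient of `α`. -/

theorem stmt6 {k : ℕ} (p : MvPolynomial (Fin k) ℝ) (hp : p ≠ 0)
    (α : Fin k →₀ ℕ) (hα : α ∈ p.support)
    (hmax : ∀ β ∈ p.support, β ≠ α → RevLexLt β α) :
    ∃ R : ℝ, 2 < R ∧ ∀ n : ℕ, k ≤ n → ∀ a : Fin n → ℝ, RGrowing R a →
      ∀ i : Fin k → Fin n, StrictMono i →
        Real.sign (MvPolynomial.eval (fun j => a (i j)) p) = Real.sign (p.coeff α) := by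
  classical
  set d := p.totalDegree with hdDef
  set cα := p.coeff α with hcαDef
  have hcα0 : cα ≠ 0 := MvPolynomial.mem_support_iff.mp hα
  have hcabs : 0 < |cα| := abs_pos.mpr hcα0
  set M := ∑ β ∈ p.support.erase α, |p.coeff β| with hMDef
  have hM0 : 0 ≤ M := Finset.sum_nonneg fun _ _ => abs_nonneg _
  set T : ℝ := M / |cα| + 1 with hTDef
  have hT1 : (1:ℝ) ≤ T := le_add_of_nonneg_left (div_nonneg hM0 hcabs.le)
  have hT0 : (0:ℝ) ≤ T := by linarith
  have hTpos : (0:ℝ) < T := by linarith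
  have hMT : M < |cα| * T := by
    have hh : |cα| * (M / |cα|) = M := by field_simp
    calc M < M + |cα| := by linarith
      _ = |cα| * T := by rw [hTDef, mul_add, mul_one, hh]
  set R := max 3 (max (2 * (d:ℝ) + 1) T) with hRDef
  have h3 : (3:ℝ) ≤ R := le_max_left _ _
  have hdR : 2 * (d:ℝ) + 1 ≤ R := le_trans (le_max_left _ _) (le_max_right _ _)
  have hTR : T ≤ R := le_trans (le_max_right _ _) (le_max_right _ _)
  have h2R : (2:ℝ) < R := lt_of_lt_of_le (by norm_num) h3
  have hR1 : (1:ℝ) ≤ R := by linarith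
  refine ⟨R, h2R, ?_⟩
  intro n hkn a hgrow i hi
  have ha0 := hgrow.1
  have hastep := hgrow.2
  -- every term of the sequence is at least R
  have haR : ∀ m, ∀ h : m < n, R ≤ a ⟨m, h⟩ := by
    intro m
    induction m with
    | zero => intro h; exact ha0 h
    | succ m ih =>
      intro h
      have hm := ih (Nat.lt_of_succ_lt h)
      calc R ≤ a ⟨m, Nat.lt_of_succ_lt h⟩ := hm
        _ = a ⟨m, Nat.lt_of_succ_lt h⟩ ^ (1:ℝ) := (Real.rpow_one _).symm
        _ ≤ a ⟨m, Nat.lt_of_succ_lt h⟩ ^ R :=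
            Real.rpow_le_rpow_of_exponent_le (by linarith) hR1
        _ ≤ a ⟨m + 1, h⟩ := hastep m h
  -- the sequence is monotone
  have hmono : ∀ m2, ∀ h2 : m2 < n, ∀ m1, ∀ h1 : m1 < n, m1 ≤ m2 →
      a ⟨m1, h1⟩ ≤ a ⟨m2, h2⟩ := by
    intro m2
    induction m2 with
    | zero =>
      intro h2 m1 h1 hle
      have : m1 = 0 := by omega
      subst this
      exact le_rfl
    | succ m2 ih =>
      intro h2 m1 h1 hle
      by_cases hc : m1 ≤ m2
      · have h2' : m2 < n := Nat.lt_of_succ_lt h2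
        have hstep1 : a ⟨m2, h2'⟩ ≤ a ⟨m2 + 1, h2⟩ := by
          calc a ⟨m2, h2'⟩ = a ⟨m2, h2'⟩ ^ (1:ℝ) := (Real.rpow_one _).symm
            _ ≤ a ⟨m2, h2'⟩ ^ R :=
                Real.rpow_le_rpow_of_exponent_le (by linarith [haR m2 h2']) hR1
            _ ≤ a ⟨m2 + 1, h2⟩ := hastep m2 h2
        exact le_trans (ih h2' m1 h1 hc) hstep1
      · have : m1 = m2 + 1 := by omega
        subst this
        exact le_rfl
  set b : Fin k → ℝ := fun j => a (i j) with hbDef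
  set B : ℕ → ℝ := fun m => if h : m < k then b ⟨m, h⟩ else 1 with hBDef
  have hbR : ∀ j : Fin k, R ≤ b j := fun j => haR (i j) (i j).isLt
  have hBR : ∀ m, m < k → R ≤ B m := by
    intro m hm
    simp only [hBDef, dif_pos hm]
    exact hbR ⟨m, hm⟩
  have hBstep : ∀ m, m + 1 < k → B m ^ R ≤ B (m + 1) := by
    intro m hm
    have hm' : m < k := Nat.lt_of_succ_lt hm
    simp only [hBDef, dif_pos hm, dif_pos hm']
    have hii : (i ⟨m, hm'⟩ : ℕ) < (i ⟨m + 1, hm⟩ : ℕ) := by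
      exact hi (show (⟨m, hm'⟩ : Fin k) < ⟨m + 1, hm⟩ from by
        simp [Fin.lt_def])
    have h1n : (i ⟨m, hm'⟩ : ℕ) + 1 < n := by
      have := (i ⟨m + 1, hm⟩).isLt
      omega
    calc b ⟨m, hm'⟩ ^ R
        = a ⟨(i ⟨m, hm'⟩ : ℕ), Nat.lt_of_succ_lt h1n⟩ ^ R := rfl
      _ ≤ a ⟨(i ⟨m, hm'⟩ : ℕ) + 1, h1n⟩ := hastep _ h1n
      _ ≤ a (i ⟨m + 1, hm⟩) := hmono _ (i ⟨m + 1, hm⟩).isLt _ h1n (by omega)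
  -- exponent bound
  have hβd : ∀ β ∈ p.support, ∀ j : Fin k, β j ≤ d := by
    intro β hβ j
    by_cases hjs : j ∈ β.support
    · have h1 : β j ≤ β.sum fun _ e => e :=
        Finset.single_le_sum (f := fun j' => β j') (fun _ _ => Nat.zero_le _) hjs
      exact le_trans h1 (MvPolynomial.le_totalDegree hβ)
    · simp [Finsupp.notMem_support_iff.mp hjs]
  -- per-term bound
  have hterm : ∀ β ∈ p.support, β ≠ α →
      T * ∏ j, b j ^ β j ≤ ∏ j, b j ^ α j := by
    intro β hβ hne
    obtain ⟨j, hjlt, hjeq⟩ := hmax β hβ hne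
    set β' : ℕ → ℕ := fun m => if h : m < k then β ⟨m, h⟩ else 0 with hβ'Def
    set γ' : ℕ → ℕ := fun m => if h : m < k then α ⟨m, h⟩ else 0 with hγ'Def
    have e1 : ∏ j' : Fin k, b j' ^ β j' = ∏ m ∈ Finset.range k, B m ^ β' m := by
      rw [← Fin.prod_univ_eq_prod_range (fun m => B m ^ β' m) k]
      exact Finset.prod_congr rfl fun j' _ => by
        simp only [hBDef, hβ'Def, dif_pos j'.isLt]
    have e2 : ∏ j' : Fin k, b j' ^ α j' = ∏ m ∈ Finset.range k, B m ^ γ' m := by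
      rw [← Fin.prod_univ_eq_prod_range (fun m => B m ^ γ' m) k]
      exact Finset.prod_congr rfl fun j' _ => by
        simp only [hBDef, hγ'Def, dif_pos j'.isLt]
    rw [e1, e2]
    refine auxTerm d k R T B β' γ' hT0 hTR hdR h3 hBR hBstep ?_ j j.isLt ?_ ?_
    · intro m hm
      simp only [hβ'Def, dif_pos hm]
      exact hβd β hβ _
    · simp only [hβ'Def, hγ'Def, dif_pos j.isLt]
      exact hjlt
    · intro m hmj hmk
      simp only [hβ'Def, hγ'Def, dif_pos hmk]
      exact hjeq ⟨m, hmk⟩ (by simp [Fin.lt_def]; omega)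
  -- assemble
  have hb1 : ∀ j : Fin k, (1:ℝ) ≤ b j := fun j => le_trans (by linarith) (hbR j)
  set P := ∏ j, b j ^ α j with hPDef
  have hP0 : (0:ℝ) < P :=
    Finset.prod_pos fun j _ => pow_pos (lt_of_lt_of_le zero_lt_one (hb1 j)) _
  have heval : MvPolynomial.eval b p = ∑ β ∈ p.support, p.coeff β * ∏ j, b j ^ β j :=
    MvPolynomial.eval_eq' b p
  set E := ∑ β ∈ p.support.erase α, p.coeff β * ∏ j, b j ^ β j with hEDef
  have hsum : MvPolynomial.eval b p = cα * P + E := by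
    rw [heval, ← Finset.add_sum_erase _ _ hα]
  have hE : |E| < |cα| * P := by
    have hstep1 : |E| ≤ ∑ β ∈ p.support.erase α, |p.coeff β| * ∏ j, b j ^ β j := by
      refine le_trans (Finset.abs_sum_le_sum_abs _ _) (le_of_eq ?_)
      refine Finset.sum_congr rfl fun β hβ => ?_
      rw [abs_mul, abs_of_nonneg (show (0:ℝ) ≤ ∏ j, b j ^ β j from
        Finset.prod_nonneg fun j _ => pow_nonneg (le_trans zero_le_one (hb1 j)) _)]
    have hstep2 : ∑ β ∈ p.support.erase α, |p.coeff β| * ∏ j, b j ^ β j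
        ≤ ∑ β ∈ p.support.erase α, |p.coeff β| * (P / T) := by
      refine Finset.sum_le_sum fun β hβ => ?_
      refine mul_le_mul_of_nonneg_left ?_ (abs_nonneg _)
      rw [le_div_iff₀ hTpos, mul_comm]
      exact hterm β (Finset.mem_of_mem_erase hβ) (Finset.ne_of_mem_erase hβ)
    have hstep3 : ∑ β ∈ p.support.erase α, |p.coeff β| * (P / T) = M * (P / T) := by
      rw [← Finset.sum_mul]
    have hstep4 : M * (P / T) < |cα| * P := by
      have h4 : M * (P / T) < (|cα| * T) * (P / T) :=
        mul_lt_mul_of_pos_right hMT (div_pos hP0 hTpos)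
      have h5 : (|cα| * T) * (P / T) = |cα| * P := by
        field_simp
      linarith
    linarith
  rcases hcα0.lt_or_gt with hneg | hpos
  · have habs : |cα| = -cα := abs_of_neg hneg
    have hEub : E < -cα * P := by
      have := le_abs_self E
      rw [habs] at hE
      linarith
    have hlt : MvPolynomial.eval b p < 0 := by
      rw [hsum]; linarith
    rw [Real.sign_of_neg hlt, Real.sign_of_neg hneg]
  · have habs : |cα| = cα := abs_of_pos hpos
    have hEub : -(cα * P) < E := by
      have := neg_abs_le E
      rw [habs] at hE
      linarith
    have hlt : 0 < MvPolynomial.eval b p := by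
      rw [hsum]; linarith
    rw [Real.sign_of_pos hlt, Real.sign_of_pos hpos]
end

section
/- For every polynomial q ∈ ℝ[y₁,…,y_k,X,Y] there exists R₀ > 2 such that for every R ≥ R₀ the following holds. (a) For all A, B ∈ ℝ and every R-growing sequence b = (b₁,…,bₙ) with n ≥ k that is R-well-placed with respect to q, A, B, the sign of q(b_{i₁},…,b_{i_k},A,B) is the same for all index tuples 1 ≤ i₁ < ⋯ < i_k ≤ n. (b) Moreover, this common sign depends only on the type: if (A′,B′) ∈ ℝ² and b′ = (b′₁,…,b′_{n′}) with n′ ≥ k is another R-growing sequence that is R-well-placed with respect to q, A′, B′, if sgn q_α(A,B) = sgn q_α(A′,B′) for every α ∈ Λ(q), and if there exists a function τ : Λ(q)² → {D, G} such that for all α, β ∈ Λ(q): τ(α,β) = D implies that the ratio is dwarfed for both (b,A,B) and (b′,A′,B′), and τ(α,β) = G implies that it is gigantic for both, then the common sign of q on increasing k-tuples of b′ (with parameters A′,B′) equals the common sign for b (with parameters A,B). -/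
/-- A polynomial `q ∈ ℝ[y₁,…,y_k,X,Y]` is taken as a polynomial in `y₁,…,y_k` whose
coefficients `q_α` are polynomials in the two variables `X, Y`; `coeffVal q α A B` is
the value `q_α(A,B)`. -/
noncomputable def coeffVal {k : ℕ} (q : MvPolynomial (Fin k) (MvPolynomial (Fin 2) ℝ))
    (α : Fin k →₀ ℕ) (A B : ℝ) : ℝ :=
  MvPolynomial.eval ![A, B] (MvPolynomial.coeff α q)

/-- The value `q(y₁,…,y_k,A,B)` of `q ∈ ℝ[y₁,…,y_k,X,Y]`. -/
noncomputable def evalFull {k : ℕ} (q : MvPolynomial (Fin k) (MvPolynomial (Fin 2) ℝ))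
    (y : Fin k → ℝ) (A B : ℝ) : ℝ :=
  MvPolynomial.eval₂ (MvPolynomial.eval ![A, B]) y q

/-- The ratio `u/v` is dwarfed by the sequence `b`: `R·|u| ≤ b₁·|v|`. -/
def Dwarfed (R : ℝ) {n : ℕ} (b : Fin n → ℝ) (u v : ℝ) : Prop :=
  ∀ h0 : 0 < n, R * |u| ≤ b ⟨0, h0⟩ * |v|

/-- The ratio `u/v` is gigantic for the sequence `b`: `|u| ≥ bₙ^R·|v|`. -/
def Gigantic (R : ℝ) {n : ℕ} (b : Fin n → ℝ) (u v : ℝ) : Prop :=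
  ∀ h0 : 0 < n, b ⟨n - 1, Nat.sub_lt h0 Nat.one_pos⟩ ^ R * |v| ≤ |u|

/-- An `R`-growing sequence `b` is `R`-well-placed w.r.t. `q, A, B` if for all
`α, β ∈ Λ(q)` the ratio `q_α(A,B)/q_β(A,B)` is dwarfed by `b` or gigantic for `b`. -/
def WellPlaced (R : ℝ) {n k : ℕ} (b : Fin n → ℝ)
    (q : MvPolynomial (Fin k) (MvPolynomial (Fin 2) ℝ)) (A B : ℝ) : Prop :=
  ∀ α ∈ q.support, ∀ β ∈ q.support,
    Dwarfed R b (coeffVal q α A B) (coeffVal q β A B) ∨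
    Gigantic R b (coeffVal q α A B) (coeffVal q β A B)

theorem Finset.prod_univ_eq_prod_Iio_mul_mul_prod_Ioi {ι M : Type*} [Fintype ι] [LinearOrder ι]
    [LocallyFiniteOrderBot ι] [LocallyFiniteOrderTop ι] [CommMonoid M] (f : ι → M) (j : ι) :
    ∏ t, f t = (∏ t ∈ Iio j, f t) * f j * ∏ t ∈ Ioi j, f t := by
  classical
  rw [mul_assoc, mul_prod_Ioi_eq_prod_Ici, ← prod_filter_mul_prod_filter_not univ (· < j)]
  congr 2 <;> ext t <;> simp

theorem gigantic_zero_right {R : ℝ} {n : ℕ} (b : Fin n → ℝ) (u : ℝ) : Gigantic R b u 0 :=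
  fun _ => by simp

namespace RGrowing

variable {R : ℝ} {n k : ℕ} {b : Fin n → ℝ}

theorem le_apply (hR : 1 ≤ R) (hb : RGrowing R b) : ∀ m : Fin n, R ≤ b m
  | ⟨0, h⟩ => hb.1 h
  | ⟨m + 1, h⟩ =>
    calc R ≤ b ⟨m, by omega⟩ := le_apply hR hb _
      _ ≤ b ⟨m, by omega⟩ ^ R := Real.self_le_rpow_of_one_le (hR.trans (le_apply hR hb _)) hR
      _ ≤ b ⟨m + 1, h⟩ := hb.2 m h

theorem monotone (hR : 1 ≤ R) (hb : RGrowing R b) : Monotone b := by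
  cases n with
  | zero => exact fun v => v.elim0
  | succ n =>
    refine Fin.monotone_iff_le_succ.mpr fun m => ?_
    calc b m.castSucc ≤ b m.castSucc ^ R :=
          Real.self_le_rpow_of_one_le (hR.trans (hb.le_apply hR _)) hR
      _ ≤ b m.succ := hb.2 m (by omega)

theorem rpow_le_of_lt (hR : 1 ≤ R) (hb : RGrowing R b) {v w : Fin n} (hvw : v < w) :
    b v ^ R ≤ b w :=
  (hb.2 v (by omega)).trans (hb.monotone hR (Fin.le_def.mpr hvw))

theorem comp_strictMono (hR : 1 ≤ R) (hb : RGrowing R b) {i : Fin k → Fin n}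
    (hi : StrictMono i) : RGrowing R (fun t => b (i t)) :=
  ⟨fun _ => hb.le_apply hR _, fun t _ => hb.rpow_le_of_lt hR (hi (Fin.mk_lt_mk.mpr t.lt_succ_self))⟩

theorem prod_Iio_pow_mul_le {y : Fin k → ℝ} (hy : RGrowing R y) {D : ℕ}
    (hD : (D : ℝ) + 1 ≤ R) {x : ℝ} (hx₀ : 0 ≤ x) (hx : ∀ t, x ≤ y t) {γ : Fin k → ℕ}
    {j : Fin k} (hγ : ∑ t ∈ Finset.Iio j, γ t ≤ D) :
    (∏ t ∈ Finset.Iio j, y t ^ γ t) * x ≤ y j := by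
  have hR : 1 ≤ R := by linarith [(D.cast_nonneg : (0 : ℝ) ≤ D)]
  have hy₁ : ∀ t, 1 ≤ y t := fun t => hR.trans (hy.le_apply hR t)
  have hy₀ : ∀ t, 0 ≤ y t := fun t => zero_le_one.trans (hy₁ t)
  rcases (Finset.Iio j).eq_empty_or_nonempty with hj | hj
  · simpa [hj] using hx j
  set s := (Finset.Iio j).max' hj
  have hs : s < j := Finset.mem_Iio.mp ((Finset.Iio j).max'_mem hj)
  calc (∏ t ∈ Finset.Iio j, y t ^ γ t) * x ≤ (∏ t ∈ Finset.Iio j, y s ^ γ t) * y s := by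
        gcongr with t ht
        · exact Finset.prod_nonneg fun _ _ => pow_nonneg (hy₀ s) _
        · exact fun t _ => pow_nonneg (hy₀ t) _
        · exact hy₀ t
        · exact hy.monotone hR ((Finset.Iio j).le_max' t ht)
        · exact hx s
    _ = y s ^ (∑ t ∈ Finset.Iio j, γ t) * y s := by rw [Finset.prod_pow_eq_pow_sum]
    _ ≤ y s ^ D * y s := mul_le_mul_of_nonneg_right (pow_le_pow_right₀ (hy₁ s) hγ) (hy₀ s)
    _ = y s ^ ((D : ℝ) + 1) := by rw [← pow_succ, ← Real.rpow_natCast]; push_cast; rfl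
    _ ≤ y s ^ R := Real.rpow_le_rpow_of_exponent_le (hy₁ s) hD
    _ ≤ y j := hy.rpow_le_of_lt hR hs

theorem prod_pow_mul_le_of_toColex_lt {y : Fin k → ℝ} (hy : RGrowing R y) {D : ℕ}
    (hD : (D : ℝ) + 1 ≤ R) {x : ℝ} (hx₀ : 0 ≤ x) (hx : ∀ t, x ≤ y t) {γ δ : Fin k → ℕ}
    (hγ : ∑ t, γ t ≤ D)    (hlt : toColex γ < toColex δ) :
    (∏ t, y t ^ γ t) * x ≤ ∏ t, y t ^ δ t := by
  obtain ⟨j, heq, hj⟩ := hlt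
  change ∀ t, j < t → γ t = δ t at heq
  change γ j < δ j at hj
  have hR : 1 ≤ R := by linarith [(D.cast_nonneg : (0 : ℝ) ≤ D)]
  have hy₁ : ∀ t, 1 ≤ y t := fun t => hR.trans (hy.le_apply hR t)
  have hy₀ : ∀ t, 0 ≤ y t := fun t => zero_le_one.trans (hy₁ t)
  have hIio : (∏ t ∈ Finset.Iio j, y t ^ γ t) * x ≤ y j :=
    hy.prod_Iio_pow_mul_le hD hx₀ hx
      ((Finset.sum_le_sum_of_subset (Finset.subset_univ _)).trans hγ)
  have hIoi : ∏ t ∈ Finset.Ioi j, y t ^ γ t = ∏ t ∈ Finset.Ioi j, y t ^ δ t :=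
    Finset.prod_congr rfl fun t ht => by rw [heq t (Finset.mem_Ioi.mp ht)]
  rw [Finset.prod_univ_eq_prod_Iio_mul_mul_prod_Ioi _ j,
    Finset.prod_univ_eq_prod_Iio_mul_mul_prod_Ioi _ j, hIoi]
  have hIoi₀ : 0 ≤ ∏ t ∈ Finset.Ioi j, y t ^ δ t :=
    Finset.prod_nonneg fun t _ => pow_nonneg (hy₀ t) _
  calc (∏ t ∈ Finset.Iio j, y t ^ γ t) * y j ^ γ j * (∏ t ∈ Finset.Ioi j, y t ^ δ t) * x
      = ((∏ t ∈ Finset.Iio j, y t ^ γ t) * x) * y j ^ γ j * ∏ t ∈ Finset.Ioi j, y t ^ δ t := by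
        ring
    _ ≤ y j ^ (γ j + 1) * ∏ t ∈ Finset.Ioi j, y t ^ δ t := by
        rw [pow_succ']; gcongr; exact pow_nonneg (hy₀ j) _
    _ ≤ 1 * y j ^ δ j * ∏ t ∈ Finset.Ioi j, y t ^ δ t := by
        rw [one_mul]; gcongr; exacts [hy₁ j, hj]
    _ ≤ (∏ t ∈ Finset.Iio j, y t ^ δ t) * y j ^ δ j * ∏ t ∈ Finset.Ioi j, y t ^ δ t := by
        gcongr
        · exact pow_nonneg (hy₀ j) _
        · exact Finset.one_le_prod fun t _ => one_le_pow₀ (hy₁ t)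

theorem apply_zero_le (hR : 1 ≤ R) (hb : RGrowing R b) (hn : 0 < n) (m : Fin n) :
    b ⟨0, hn⟩ ≤ b m :=
  hb.monotone hR (Fin.le_def.mpr (Nat.zero_le _))

theorem le_apply_last (hR : 1 ≤ R) (hb : RGrowing R b) (hn : 0 < n) (m : Fin n) :
    b m ≤ b ⟨n - 1, Nat.sub_lt hn Nat.one_pos⟩ :=
  hb.monotone hR (Fin.le_def.mpr (Nat.le_sub_one_of_lt m.isLt))

theorem eq_zero_of_dwarfed_of_gigantic (hR : 1 < R) (hb : RGrowing R b) (hn : 0 < n)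
    {u v : ℝ} (hd : Dwarfed R b u v) (hg : Gigantic R b u v) : v = 0 := by
  set L := b ⟨n - 1, Nat.sub_lt hn Nat.one_pos⟩
  have hL : R ≤ L := hb.le_apply hR.le _
  have hb₀ : b ⟨0, hn⟩ ≤ L := hb.apply_zero_le hR.le hn _
  have hLR : L ≤ L ^ R := Real.self_le_rpow_of_one_le (by linarith) hR.le
  have hd : R * |u| ≤ b ⟨0, hn⟩ * |v| := hd hn
  have hg : L ^ R * |v| ≤ |u| := hg hn
  by_contra hv
  have hv := abs_pos.mpr hv
  have hu : 0 < |u| := hg.trans_lt' (mul_pos (Real.rpow_pos_of_pos (by linarith) R) hv)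
  nlinarith [mul_le_mul_of_nonneg_right (hb₀.trans hLR) hv.le]

theorem one_le_prod_pow (hR : 1 ≤ R) (hb : RGrowing R b) (i : Fin k → Fin n)
    (γ : Fin k → ℕ) : 1 ≤ ∏ t, b (i t) ^ γ t :=
  Finset.one_le_prod fun _ _ => one_le_pow₀ (hR.trans (hb.le_apply hR _))

theorem prod_pow_le_pow_of_sum_le (hR : 1 ≤ R) (hb : RGrowing R b) (hn : 0 < n)
    (i : Fin k → Fin n) {D : ℕ} {γ : Fin k → ℕ} (hγ : ∑ t, γ t ≤ D) :
    ∏ t, b (i t) ^ γ t ≤ b ⟨n - 1, Nat.sub_lt hn Nat.one_pos⟩ ^ D := by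
  set L := b ⟨n - 1, Nat.sub_lt hn Nat.one_pos⟩
  have hb₀ : ∀ m, 0 ≤ b m := fun m => by linarith [hb.le_apply hR m]
  calc ∏ t, b (i t) ^ γ t ≤ ∏ t, L ^ γ t := by
        refine Finset.prod_le_prod (fun _ _ => pow_nonneg (hb₀ _) _) fun _ _ => ?_
        exact pow_le_pow_left₀ (hb₀ _) (hb.le_apply_last hR hn _) _
    _ = L ^ ∑ t, γ t := Finset.prod_pow_eq_pow_sum _ _ _
    _ ≤ L ^ D := pow_le_pow_right₀ (hR.trans (hb.le_apply hR _)) hγ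

theorem mul_term_le_of_gigantic (hb : RGrowing R b) (hn : 0 < n) {D : ℕ}
    (hD : (D : ℝ) + 1 ≤ R) (i : Fin k → Fin n) {γ : Fin k → ℕ} (hγ : ∑ t, γ t ≤ D)
    (δ : Fin k → ℕ) {u v : ℝ} (h : Gigantic R b u v) :
    R * (|v| * ∏ t, b (i t) ^ γ t) ≤ |u| * ∏ t, b (i t) ^ δ t := by
  have hR : 1 ≤ R := by linarith [(D.cast_nonneg : (0 : ℝ) ≤ D)]
  set L := b ⟨n - 1, Nat.sub_lt hn Nat.one_pos⟩
  have hL : R ≤ L := hb.le_apply hR _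
  calc R * (|v| * ∏ t, b (i t) ^ γ t) ≤ L * (|v| * L ^ D) := by
        have hM := zero_le_one.trans (hb.one_le_prod_pow hR i γ)
        exact mul_le_mul hL (mul_le_mul_of_nonneg_left (hb.prod_pow_le_pow_of_sum_le hR hn i hγ)
          (abs_nonneg v)) (mul_nonneg (abs_nonneg v) hM) (by linarith)
    _ = L ^ ((D : ℝ) + 1) * |v| := by
        rw [← Nat.cast_succ, Real.rpow_natCast, pow_succ]; ring
    _ ≤ L ^ R * |v| :=
        mul_le_mul_of_nonneg_right (Real.rpow_le_rpow_of_exponent_le (by linarith) hD)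
          (abs_nonneg v)
    _ ≤ |u| := h hn
    _ ≤ |u| * ∏ t, b (i t) ^ δ t :=
        le_mul_of_one_le_right (abs_nonneg u) (hb.one_le_prod_pow hR i δ)

theorem mul_term_le_of_dwarfed (hb : RGrowing R b) (hn : 0 < n) {D : ℕ}
    (hD : (D : ℝ) + 1 ≤ R) {i : Fin k → Fin n} (hi : StrictMono i) {γ δ : Fin k → ℕ}
    (hγ : ∑ t, γ t ≤ D) (hlt : toColex γ < toColex δ) {u v : ℝ} (h : Dwarfed R b v u) :
    R * (|v| * ∏ t, b (i t) ^ γ t) ≤ |u| * ∏ t, b (i t) ^ δ t := by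
  have hR : 1 ≤ R := by linarith [(D.cast_nonneg : (0 : ℝ) ≤ D)]
  have hb₀ : 0 ≤ b ⟨0, hn⟩ := by linarith [hb.le_apply hR ⟨0, hn⟩]
  have hM : 0 ≤ ∏ t, b (i t) ^ γ t := zero_le_one.trans (hb.one_le_prod_pow hR i γ)
  calc R * (|v| * ∏ t, b (i t) ^ γ t) ≤ b ⟨0, hn⟩ * |u| * ∏ t, b (i t) ^ γ t := by
        rw [← mul_assoc]; exact mul_le_mul_of_nonneg_right (h hn) hM
    _ = |u| * ((∏ t, b (i t) ^ γ t) * b ⟨0, hn⟩) := by ring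
    _ ≤ |u| * ∏ t, b (i t) ^ δ t := by
        gcongr
        exact (hb.comp_strictMono hR hi).prod_pow_mul_le_of_toColex_lt hD hb₀
          (fun t => hb.apply_zero_le hR hn _) hγ hlt

end RGrowing

theorem Real.sign_eq_of_abs_sub_lt {x y : ℝ} (h : |x - y| < |y|) : Real.sign x = Real.sign y := by
  rcases lt_trichotomy y 0 with hy | rfl | hy
  · rw [abs_of_neg hy] at h
    rw [Real.sign_of_neg hy, Real.sign_of_neg (by linarith [le_abs_self (x - y)])]
  · rw [abs_zero] at h; exact absurd h (abs_nonneg _).not_gt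
  · rw [abs_of_pos hy] at h
    rw [Real.sign_of_pos hy, Real.sign_of_pos (by linarith [neg_abs_le (x - y)])]

theorem Real.sign_mul_of_pos {x y : ℝ} (hy : 0 < y) : Real.sign (x * y) = Real.sign x := by
  rcases lt_trichotomy x 0 with hx | rfl | hx
  · rw [Real.sign_of_neg hx, Real.sign_of_neg (mul_neg_of_neg_of_pos hx hy)]
  · rw [zero_mul]
  · rw [Real.sign_of_pos hx, Real.sign_of_pos (mul_pos hx hy)]

theorem Real.sign_sum_eq_of_dominant {ι : Type*} {s : Finset ι} {f : ι → ℝ} {a : ι} {R : ℝ}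
    (ha : a ∈ s) (hfa : f a ≠ 0) (hcard : (s.card : ℝ) ≤ R)
    (hdom : ∀ b ∈ s, b ≠ a → R * |f b| ≤ |f a|) :
    Real.sign (∑ b ∈ s, f b) = Real.sign (f a) := by
  classical
  apply Real.sign_eq_of_abs_sub_lt
  rw [← Finset.sum_erase_add _ _ ha, add_sub_cancel_right]
  have hfa := abs_pos.mpr hfa
  have hcard' : ((s.erase a).card : ℝ) + 1 ≤ R :=
    mod_cast (Finset.card_erase_add_one ha).symm ▸ hcard
  have hR : 0 < R := by linarith [((s.erase a).card.cast_nonneg : (0 : ℝ) ≤ _)]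
  refine lt_of_mul_lt_mul_left ?_ hR.le
  calc R * |∑ b ∈ s.erase a, f b| ≤ ∑ b ∈ s.erase a, R * |f b| := by
        rw [← Finset.mul_sum]; gcongr; exact Finset.abs_sum_le_sum_abs _ _
    _ ≤ ∑ _b ∈ s.erase a, |f a| := Finset.sum_le_sum fun b hb =>
        hdom b (Finset.mem_of_mem_erase hb) (Finset.ne_of_mem_erase hb)
    _ = (s.erase a).card * |f a| := by rw [Finset.sum_const, nsmul_eq_mul]
    _ < R * |f a| := by nlinarith

section Dominance

variable {R : ℝ} {n n' k : ℕ} {b : Fin n → ℝ} {b' : Fin n' → ℝ}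

def IsDominantExponent (R : ℝ) (b : Fin n → ℝ) (s : Finset (Fin k →₀ ℕ))
    (c : (Fin k →₀ ℕ) → ℝ) (α : Fin k →₀ ℕ) : Prop :=
  α ∈ s ∧ c α ≠ 0 ∧ ∀ β ∈ s, β ≠ α →
    Gigantic R b (c α) (c β) ∨ (Dwarfed R b (c β) (c α) ∧ toColex ⇑β < toColex ⇑α)

theorem IsDominantExponent.sign_sum_eq {s : Finset (Fin k →₀ ℕ)} {c : (Fin k →₀ ℕ) → ℝ}
    {α : Fin k →₀ ℕ} (h : IsDominantExponent R b s c α) (hb : RGrowing R b) (hn : 0 < n)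
    {D : ℕ} (hD : (D : ℝ) + 1 ≤ R) (hdeg : ∀ β ∈ s, ∑ t, β t ≤ D) (hcard : (s.card : ℝ) ≤ R)
    {i : Fin k → Fin n} (hi : StrictMono i) :
    Real.sign (∑ β ∈ s, c β * ∏ t, b (i t) ^ β t) = Real.sign (c α) := by
  have hR : 1 ≤ R := by linarith [(D.cast_nonneg : (0 : ℝ) ≤ D)]
  have hM : ∀ β : Fin k →₀ ℕ, 0 < ∏ t, b (i t) ^ β t :=
    fun β => zero_lt_one.trans_le (hb.one_le_prod_pow hR i β)
  rw [← Real.sign_mul_of_pos (x := c α) (hM α)]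
  refine Real.sign_sum_eq_of_dominant h.1
    (mul_ne_zero h.2.1 (hM α).ne') hcard fun β hβ hne => ?_
  rw [abs_mul, abs_mul, abs_of_pos (hM β), abs_of_pos (hM α)]
  rcases h.2.2 β hβ hne with hg | ⟨hd, hlt⟩
  · exact hb.mul_term_le_of_gigantic hn hD i (hdeg β hβ) _ hg
  · exact hb.mul_term_le_of_dwarfed hn hD hi (hdeg β hβ) hlt hd

theorem exists_isDominantExponent {s : Finset (Fin k →₀ ℕ)} {c : (Fin k →₀ ℕ) → ℝ}
    (hR : 1 < R) (hb : RGrowing R b) (hn : 0 < n) (hkn : k ≤ n) {D : ℕ}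
    (hD : (D : ℝ) + 1 ≤ R) (hdeg : ∀ β ∈ s, ∑ t, β t ≤ D)
    (hw : ∀ α ∈ s, ∀ β ∈ s, Dwarfed R b (c α) (c β) ∨ Gigantic R b (c α) (c β))
    (hc : ∃ β ∈ s, c β ≠ 0) :
    ∃ α, IsDominantExponent R b s c α := by
  obtain ⟨β₀, hβ₀, hcβ₀⟩ := hc
  have hi := Fin.strictMono_castLE hkn
  set i : Fin k → Fin n := Fin.castLE hkn
  set size := fun β : Fin k →₀ ℕ => |c β| * ∏ t, b (i t) ^ β t
  have hM : ∀ β : Fin k →₀ ℕ, 0 < ∏ t, b (i t) ^ β t :=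
    fun β => zero_lt_one.trans_le (hb.one_le_prod_pow hR.le i β)
  obtain ⟨α, hα, hmax⟩ := s.exists_max_image size ⟨β₀, hβ₀⟩
  have hsize : 0 < size α := (mul_pos (abs_pos.mpr hcβ₀) (hM β₀)).trans_le (hmax β₀ hβ₀)
  have hcα : c α ≠ 0 := fun h => by simp [size, h] at hsize
  have hnot : ∀ β ∈ s, ¬ R * size α ≤ size β := fun β hβ h => by nlinarith [hmax β hβ]
  refine ⟨α, hα, hcα, fun β hβ hne => ?_⟩
  rcases hw α hα β hβ with hdα | hg
  · rcases hw β hβ α hα with hdβ | hgβ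
    · refine Or.inr ⟨hdβ, ?_⟩
      rcases lt_trichotomy (toColex ⇑β) (toColex ⇑α) with hlt | heq | hgt
      · exact hlt
      · exact absurd (DFunLike.coe_injective (toColex.injective heq)) hne
      · exact absurd (hb.mul_term_le_of_dwarfed hn hD hi (hdeg α hα) hgt hdα) (hnot β hβ)
    · exact absurd (hb.mul_term_le_of_gigantic hn hD i (hdeg α hα) _ hgβ) (hnot β hβ)
  · exact Or.inl hg

def HaveSameType {ι : Type*} (R : ℝ) (b : Fin n → ℝ) (b' : Fin n' → ℝ) (s : Finset ι)
    (c c' : ι → ℝ) : Prop :=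
  (∀ α ∈ s, Real.sign (c α) = Real.sign (c' α)) ∧
  ∃ τ : ι → ι → Bool, ∀ α ∈ s, ∀ β ∈ s,
    (τ α β = true → Dwarfed R b (c α) (c β) ∧ Dwarfed R b' (c' α) (c' β)) ∧
    (τ α β = false → Gigantic R b (c α) (c β) ∧ Gigantic R b' (c' α) (c' β))

theorem haveSameType_self {ι : Type*} {s : Finset ι} {c : ι → ℝ}
    (hw : ∀ α ∈ s, ∀ β ∈ s, Dwarfed R b (c α) (c β) ∨ Gigantic R b (c α) (c β)) :
    HaveSameType R b b s c c := by
  classical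
  refine ⟨fun _ _ => rfl, fun α β => decide (Dwarfed R b (c α) (c β)), fun α hα β hβ => ⟨?_, ?_⟩⟩
  · intro h
    exact ⟨of_decide_eq_true h, of_decide_eq_true h⟩
  · intro h
    have hg := (hw α hα β hβ).resolve_left (of_decide_eq_false h)
    exact ⟨hg, hg⟩

theorem HaveSameType.eq_zero_iff {ι : Type*} {s : Finset ι} {c c' : ι → ℝ}
    (h : HaveSameType R b b' s c c') {α : ι} (hα : α ∈ s) : c α = 0 ↔ c' α = 0 := by
  rw [← Real.sign_eq_zero_iff, h.1 α hα, Real.sign_eq_zero_iff]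

theorem IsDominantExponent.of_haveSameType {s : Finset (Fin k →₀ ℕ)}
    {c c' : (Fin k →₀ ℕ) → ℝ} {α : Fin k →₀ ℕ} (h : IsDominantExponent R b s c α)
    (hR : 1 < R) (hb : RGrowing R b) (hn : 0 < n) (hT : HaveSameType R b b' s c c') :
    IsDominantExponent R b' s c' α := by
  obtain ⟨hα, hcα, hdom⟩ := h
  obtain ⟨τ, hτ⟩ := hT.2
  refine ⟨hα, fun h0 => hcα ((hT.eq_zero_iff hα).mpr h0), fun β hβ hne => ?_⟩
  by_cases hcβ : c β = 0
  · rw [(hT.eq_zero_iff hβ).mp hcβ]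
    exact Or.inl (gigantic_zero_right _ _)
  rcases hdom β hβ hne with hg | ⟨hd, hlt⟩
  · cases hτα : τ α β
    · exact Or.inl ((hτ α hα β hβ).2 hτα).2
    · exact absurd (hb.eq_zero_of_dwarfed_of_gigantic hR hn ((hτ α hα β hβ).1 hτα).1 hg) hcβ
  · cases hτβ : τ β α
    · exact absurd (hb.eq_zero_of_dwarfed_of_gigantic hR hn hd ((hτ β hβ α hα).2 hτβ).1) hcα
    · exact Or.inr ⟨((hτ β hβ α hα).1 hτβ).2, hlt⟩

end Dominance

section Polynomial

variable {k : ℕ} (q : MvPolynomial (Fin k) (MvPolynomial (Fin 2) ℝ))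

theorem evalFull_eq_sum (y : Fin k → ℝ) (A B : ℝ) :
    evalFull q y A B = ∑ β ∈ q.support, coeffVal q β A B * ∏ t, y t ^ β t :=
  MvPolynomial.eval₂_eq' _ _ _

theorem coeffVal_eq_zero_of_notMem {α : Fin k →₀ ℕ} (hα : α ∉ q.support) (A B : ℝ) :
    coeffVal q α A B = 0 := by
  rw [coeffVal, MvPolynomial.notMem_support_iff.mp hα, map_zero]

theorem sum_le_totalDegree {α : Fin k →₀ ℕ} (hα : α ∈ q.support) : ∑ t, α t ≤ q.totalDegree :=
  (Finsupp.sum_fintype α (fun _ e => e) fun _ => rfl) ▸ MvPolynomial.le_totalDegree hα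

theorem evalFull_fin_zero (q : MvPolynomial (Fin 0) (MvPolynomial (Fin 2) ℝ))
    (y : Fin 0 → ℝ) (A B : ℝ) : evalFull q y A B = coeffVal q 0 A B := by
  rw [evalFull_eq_sum, Finset.sum_eq_single 0 (fun β _ hβ => absurd (Subsingleton.elim β 0) hβ)
    fun h => by rw [coeffVal_eq_zero_of_notMem q h, zero_mul]]
  simp

theorem sign_evalFull_eq_of_haveSameType {R A B A' B' : ℝ} {n n' : ℕ} (hR : 1 < R)
    (hD : (q.totalDegree : ℝ) + 1 ≤ R) (hcard : (q.support.card : ℝ) ≤ R)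
    {b : Fin n → ℝ} {b' : Fin n' → ℝ} (hkn : k ≤ n) (hkn' : k ≤ n')
    (hb : RGrowing R b) (hb' : RGrowing R b') (hw : WellPlaced R b q A B)
    (hT : HaveSameType R b b' q.support (coeffVal q · A B) (coeffVal q · A' B'))
    {i : Fin k → Fin n} (hi : StrictMono i) {i' : Fin k → Fin n'} (hi' : StrictMono i') :
    Real.sign (evalFull q (fun j => b (i j)) A B) =
      Real.sign (evalFull q (fun j => b' (i' j)) A' B') := by
  rcases Nat.eq_zero_or_pos k with rfl | hk
  · rw [evalFull_fin_zero, evalFull_fin_zero]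
    by_cases h0 : 0 ∈ q.support
    · exact hT.1 0 h0
    · rw [coeffVal_eq_zero_of_notMem q h0, coeffVal_eq_zero_of_notMem q h0]
  have hn := hk.trans_le hkn
  have hdeg : ∀ β ∈ q.support, ∑ t, β t ≤ q.totalDegree := fun β => sum_le_totalDegree q
  rw [evalFull_eq_sum, evalFull_eq_sum]
  by_cases hc : ∃ β ∈ q.support, coeffVal q β A B ≠ 0
  · obtain ⟨α, hα⟩ := exists_isDominantExponent hR hb hn hkn hD hdeg hw hc
    rw [hα.sign_sum_eq hb hn hD hdeg hcard hi,
      (hα.of_haveSameType hR hb hn hT).sign_sum_eq hb' (hk.trans_le hkn') hD hdeg hcard hi']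
    exact hT.1 α hα.1
  · push Not at hc
    rw [Finset.sum_eq_zero fun β hβ => by rw [hc β hβ, zero_mul],
      Finset.sum_eq_zero fun β hβ => by rw [(hT.eq_zero_iff hβ).mp (hc β hβ), zero_mul]]

end Polynomial

/-- for every `q ∈ ℝ[y₁,…,y_k,X,Y]` there is `R₀ > 2` such that for all
`R ≥ R₀`: (a) the sign of `q(b_{i₁},…,b_{i_k},A,B)` is the same for all increasing
`k`-tuples of any `R`-growing sequence `b` that is `R`-well-placed w.r.t. `q, A, B`;
(b) this common sign depends only on the type, i.e., it agrees for two such data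
`(b,A,B)` and `(b′,A′,B′)` whenever the coefficient signs agree and a common
dwarfed/gigantic pattern `τ` exists. -/
theorem stmt9 {k : ℕ} (q : MvPolynomial (Fin k) (MvPolynomial (Fin 2) ℝ)) :
    ∃ R₀ : ℝ, 2 < R₀ ∧ ∀ R : ℝ, R₀ ≤ R →
      (∀ A B : ℝ, ∀ n : ℕ, k ≤ n → ∀ b : Fin n → ℝ,
        RGrowing R b → WellPlaced R b q A B →
        ∀ i i' : Fin k → Fin n, StrictMono i → StrictMono i' →
          Real.sign (evalFull q (fun j => b (i j)) A B) =
            Real.sign (evalFull q (fun j => b (i' j)) A B)) ∧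
      (∀ A B A' B' : ℝ, ∀ n n' : ℕ, k ≤ n → k ≤ n' →
        ∀ b : Fin n → ℝ, ∀ b' : Fin n' → ℝ,
        RGrowing R b → RGrowing R b' →
        WellPlaced R b q A B → WellPlaced R b' q A' B' →
        (∀ α ∈ q.support,
          Real.sign (coeffVal q α A B) = Real.sign (coeffVal q α A' B')) →
        (∃ τ : (Fin k →₀ ℕ) → (Fin k →₀ ℕ) → Bool,
          ∀ α ∈ q.support, ∀ β ∈ q.support,
            (τ α β = true →
              Dwarfed R b (coeffVal q α A B) (coeffVal q β A B) ∧
              Dwarfed R b' (coeffVal q α A' B') (coeffVal q β A' B')) ∧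
            (τ α β = false →
              Gigantic R b (coeffVal q α A B) (coeffVal q β A B) ∧
              Gigantic R b' (coeffVal q α A' B') (coeffVal q β A' B'))) →
        ∀ i : Fin k → Fin n, StrictMono i → ∀ i' : Fin k → Fin n', StrictMono i' →
          Real.sign (evalFull q (fun j => b (i j)) A B) =
            Real.sign (evalFull q (fun j => b' (i' j)) A' B')) := by
  have hdeg₀ : (0 : ℝ) ≤ q.totalDegree := q.totalDegree.cast_nonneg
  have hcard₀ : (0 : ℝ) ≤ q.support.card := q.support.card.cast_nonneg
  refine ⟨q.totalDegree + q.support.card + 3, by linarith, fun R hR => ?_⟩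
  refine ⟨fun A B n hn b hb hw i i' hi hi' => ?_,
    fun A B A' B' n n' hn hn' b b' hb hb' hw _ hsgn hτ i hi i' hi' => ?_⟩
  · exact sign_evalFull_eq_of_haveSameType q (by linarith) (by linarith) (by linarith) hn hn hb hb
      hw (haveSameType_self hw) hi hi'
  · exact sign_evalFull_eq_of_haveSameType q (by linarith) (by linarith) (by linarith) hn hn' hb
      hb' hw ⟨hsgn, hτ⟩ hi hi'
end

section
/- For every n ≥ 1 and every N ≥ C(2n, n) (the central binomial coefficient), every strictly increasing sequence (a₁,…,a_N) of real numbers has an n-term subsequence b = (b₁,…,bₙ) such that either b satisfies the doubling differences condition, or the sequence (−bₙ, −b_{n−1}, …, −b₁) satisfies the doubling differences condition. -/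
/-!
Split a finite set `S` at the midpoint of `[min S, max S]`. Every `y` in the lower half satisfies
`2 (y - x) ≤ max S - x` for all `x ≥ min S`, so adjoining `max S` to a left-doubling subset of the
lower half keeps it left-doubling; dually, `min S` extends a right-doubling subset of the upper
half. As `C(p+q+2, p+1) = C(p+q+1, p) + C(p+q+1, p+1)`, one of the halves is large enough for the
induction, exactly as in the Erdős–Szekeres argument.
-/

def DDC {n : ℕ} (b : Fin n → ℝ) : Prop :=
  ∀ i j l : Fin n, i < j → j < l → 2 * |b j - b i| ≤ |b l - b i|

open Finset

section Doubling

variable {𝕜 : Type*} [Field 𝕜] [LinearOrder 𝕜]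

def LeftDoubling (T : Finset 𝕜) : Prop :=
  ∀ x ∈ T, ∀ y ∈ T, ∀ z ∈ T, x < y → y < z → 2 * (y - x) ≤ z - x

/-- The doubling differences condition for the sequence `(-bₙ, …, -b₁)` of an increasing
enumeration `b` of `T`. -/
def RightDoubling (T : Finset 𝕜) : Prop :=
  ∀ x ∈ T, ∀ y ∈ T, ∀ z ∈ T, x < y → y < z → 2 * (z - y) ≤ z - x

theorem leftDoubling_singleton (x : 𝕜) : LeftDoubling {x} := by
  simp [LeftDoubling]

theorem rightDoubling_singleton (x : 𝕜) : RightDoubling {x} := by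
  simp [RightDoubling]

theorem LeftDoubling.mono {T T' : Finset 𝕜} (hT : LeftDoubling T) (h : T' ⊆ T) :
    LeftDoubling T' :=
  fun x hx y hy z hz ↦ hT x (h hx) y (h hy) z (h hz)

theorem RightDoubling.mono {T T' : Finset 𝕜} (hT : RightDoubling T) (h : T' ⊆ T) :
    RightDoubling T' :=
  fun x hx y hy z hz ↦ hT x (h hx) y (h hy) z (h hz)

variable [IsStrictOrderedRing 𝕜]

theorem LeftDoubling.insert {T : Finset 𝕜} (hT : LeftDoubling T) {lo c : 𝕜}
    (hlo : ∀ x ∈ T, lo ≤ x) (hc : ∀ x ∈ T, 2 * x ≤ lo + c) : LeftDoubling (insert c T) := by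
  intro x hx y hy z hz hxy hyz
  rw [mem_insert] at hx hy hz
  rcases hx with rfl | hx
  · rcases hy with rfl | hy
    · exact absurd hxy (lt_irrefl _)
    · linarith [hlo y hy, hc y hy]
  rcases hy with rfl | hy
  · rcases hz with rfl | hz
    · exact absurd hyz (lt_irrefl _)
    · linarith [hlo z hz, hc z hz]
  rcases hz with rfl | hz
  · linarith [hlo x hx, hc y hy]
  · exact hT x hx y hy z hz hxy hyz

theorem RightDoubling.insert {T : Finset 𝕜} (hT : RightDoubling T) {hi c : 𝕜}
    (hhi : ∀ x ∈ T, x ≤ hi) (hc : ∀ x ∈ T, c + hi ≤ 2 * x) : RightDoubling (insert c T) := by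
  intro x hx y hy z hz hxy hyz
  rw [mem_insert] at hx hy hz
  rcases hz with rfl | hz
  · rcases hy with rfl | hy
    · exact absurd hyz (lt_irrefl _)
    · linarith [hhi y hy, hc y hy]
  rcases hy with rfl | hy
  · rcases hx with rfl | hx
    · exact absurd hxy (lt_irrefl _)
    · linarith [hhi x hx, hc x hx]
  rcases hx with rfl | hx
  · linarith [hhi z hz, hc y hy]
  · exact hT x hx y hy z hz hxy hyz

theorem exists_leftDoubling_or_rightDoubling (p q : ℕ) (S : Finset 𝕜)
    (hS : (p + q).choose p ≤ #S) :
    ∃ T ⊆ S, (#T = p + 1 ∧ LeftDoubling T) ∨ (#T = q + 1 ∧ RightDoubling T) := by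
  induction p generalizing q S with
  | zero =>
    obtain ⟨x, hx⟩ : S.Nonempty := card_pos.1 (by simpa using hS)
    exact ⟨{x}, by simpa using hx, .inl ⟨card_singleton x, leftDoubling_singleton x⟩⟩
  | succ p ihp =>
    induction q generalizing S with
    | zero =>
      obtain ⟨x, hx⟩ : S.Nonempty := card_pos.1 (by simpa using hS)
      exact ⟨{x}, by simpa using hx, .inr ⟨card_singleton x, rightDoubling_singleton x⟩⟩
    | succ q ihq =>
      classical
      rw [show p + 1 + (q + 1) = p + q + 1 + 1 by ring, Nat.choose_succ_succ'] at hS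
      have hS2 : 1 < #S := by
        have := Nat.choose_pos (show p ≤ p + q + 1 by omega)
        have := Nat.choose_pos (show p + 1 ≤ p + q + 1 by omega)
        omega
      have hne : S.Nonempty := card_pos.1 (by omega)
      set lo := S.min' hne
      set hi := S.max' hne
      have hlohi : lo < hi := S.min'_lt_max'_of_card hS2
      set A := S.filter (fun x ↦ 2 * x ≤ lo + hi)
      set B := S.filter (fun x ↦ ¬ 2 * x ≤ lo + hi)
      have hAB : #A + #B = #S := card_filter_add_card_filter_not _
      by_cases hA : (p + q + 1).choose p ≤ #A
      · obtain ⟨T, hTA, hT⟩ := ihp (q + 1) A hA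
        have hTS : T ⊆ S := hTA.trans (filter_subset _ _)
        rcases hT with ⟨hcard, hT⟩ | hT
        · have hiT : hi ∉ T := fun h ↦ by linarith [(mem_filter.1 (hTA h)).2]
          refine ⟨insert hi T, insert_subset (S.max'_mem hne) hTS, .inl ⟨?_, ?_⟩⟩
          · rw [card_insert_of_notMem hiT, hcard]
          · exact hT.insert (fun x hx ↦ S.min'_le x (hTS hx))
              (fun x hx ↦ (mem_filter.1 (hTA hx)).2)
        · exact ⟨T, hTS, .inr hT⟩
      · have hB : (p + 1 + q).choose (p + 1) ≤ #B := by
          rw [show p + 1 + q = p + q + 1 by ring]; omega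
        obtain ⟨T, hTB, hT⟩ := ihq B hB
        have hTS : T ⊆ S := hTB.trans (filter_subset _ _)
        rcases hT with hT | ⟨hcard, hT⟩
        · exact ⟨T, hTS, .inl hT⟩
        · have hloT : lo ∉ T := fun h ↦ (mem_filter.1 (hTB h)).2 (by linarith)
          refine ⟨insert lo T, insert_subset (S.min'_mem hne) hTS, .inr ⟨?_, ?_⟩⟩
          · rw [card_insert_of_notMem hloT, hcard]
          · exact hT.insert (fun x hx ↦ S.le_max' x (hTS hx))
              (fun x hx ↦ (not_le.1 (mem_filter.1 (hTB hx)).2).le)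

theorem exists_card_eq_leftDoubling_or_rightDoubling (n : ℕ) (S : Finset 𝕜)
    (hS : (2 * n).choose n ≤ #S) :
    ∃ T ⊆ S, #T = n ∧ (LeftDoubling T ∨ RightDoubling T) := by
  obtain ⟨T, hTS, hT⟩ := exists_leftDoubling_or_rightDoubling n n S (by rwa [← two_mul])
  have hnT : n ≤ #T := by rcases hT with ⟨h, -⟩ | ⟨h, -⟩ <;> omega
  obtain ⟨T', hT'T, hcard⟩ := exists_subset_card_eq hnT
  refine ⟨T', hT'T.trans hTS, hcard, ?_⟩
  rcases hT with ⟨-, hT⟩ | ⟨-, hT⟩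
  exacts [.inl (hT.mono hT'T), .inr (hT.mono hT'T)]

end Doubling

section DDC

variable {n : ℕ} {T : Finset ℝ} {b : Fin n → ℝ}

theorem LeftDoubling.ddc (hT : LeftDoubling T) (hb : StrictMono b) (hbT : ∀ j, b j ∈ T) :
    DDC b := by
  intro i j l hij hjl
  rw [abs_of_pos (sub_pos.2 (hb hij)), abs_of_pos (sub_pos.2 (hb (hij.trans hjl)))]
  exact hT _ (hbT i) _ (hbT j) _ (hbT l) (hb hij) (hb hjl)

theorem RightDoubling.ddc_neg_rev (hT : RightDoubling T) (hb : StrictMono b)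
    (hbT : ∀ j, b j ∈ T) : DDC (fun j ↦ -b j.rev) := by
  intro i j l hij hjl
  have hlj : b l.rev < b j.rev := hb (Fin.rev_lt_rev.2 hjl)
  have hji : b j.rev < b i.rev := hb (Fin.rev_lt_rev.2 hij)
  have key := hT _ (hbT l.rev) _ (hbT j.rev) _ (hbT i.rev) hlj hji
  rw [abs_of_pos (by linarith), abs_of_pos (by linarith)]
  linarith

end DDC

theorem exists_strictMono_mem_of_subset_range {α β : Type*} [LinearOrder α] {a : α → β}
    (ha : Function.Injective a) {n : ℕ} {T : Finset β} (hT : #T = n)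
    (hTa : (T : Set β) ⊆ Set.range a) : ∃ φ : Fin n → α, StrictMono φ ∧ ∀ j, a (φ j) ∈ T := by
  classical
  have hI : #(T.preimage a ha.injOn) = n := by
    rw [card_preimage, filter_true_of_mem fun x hx ↦ hTa hx, hT]
  exact ⟨(T.preimage a ha.injOn).orderEmbOfFin hI, OrderEmbedding.strictMono _,
    fun j ↦ mem_preimage.1 (orderEmbOfFin_mem _ hI j)⟩

theorem stmt10_general (n : ℕ) (N : ℕ) (hN : Nat.choose (2 * n) n ≤ N)
    (a : Fin N → ℝ) (ha : StrictMono a) :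
    ∃ φ : Fin n → Fin N, StrictMono φ ∧
      (DDC (fun j => a (φ j)) ∨ DDC (fun j : Fin n => -(a (φ j.rev)))) := by
  classical
  have hS : #(univ.image a) = N := by
    rw [card_image_of_injective _ ha.injective, card_univ, Fintype.card_fin]
  obtain ⟨T, hTS, hcard, hT⟩ :=
    exists_card_eq_leftDoubling_or_rightDoubling n (univ.image a) (by rwa [hS])
  obtain ⟨φ, hφ, hφT⟩ := exists_strictMono_mem_of_subset_range ha.injective hcard
    fun x hx ↦ by simpa using hTS hx
  refine ⟨φ, hφ, hT.imp (fun hT ↦ hT.ddc (ha.comp hφ) hφT) fun hT ↦ ?_⟩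
  exact hT.ddc_neg_rev (ha.comp hφ) hφT

/-- every strictly increasing real sequence of length at least
`C(2n, n)` has an `n`-term subsequence `b` such that `b` or `(−bₙ,…,−b₁)` satisfies
the doubling differences condition. -/
theorem stmt10 (n : ℕ) (hn : 1 ≤ n) (N : ℕ) (hN : Nat.choose (2 * n) n ≤ N)
    (a : Fin N → ℝ) (ha : StrictMono a) :
    ∃ φ : Fin n → Fin N, StrictMono φ ∧
      (DDC (fun j => a (φ j)) ∨ DDC (fun j : Fin n => -(a (φ j.rev)))) :=
  stmt10_general n N hN a ha
end

section
/- For every n ≥ 1 and every real R > 1, setting r := ⌈log₂ R⌉, every strictly increasing sequence of real numbers of length at least 4^(r·(n−1)+1) has an n-term subsequence b = (b₁,…,bₙ) such that either b_k − b_i ≥ R·(b_j − b_i) for all 1 ≤ i < j < k ≤ n, or the sequence c := (−bₙ, −b_{n−1}, …, −b₁) satisfies c_k − c_i ≥ R·(c_j − c_i) for all 1 ≤ i < j < k ≤ n. -/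
/-!
Let `ℓ = 2 ^ ⌈log₂ R⌉ ≥ R`. By induction on `d`, every set of at least `ℓ ^ d` reals has an
`R`-expanding subset of size `p` and a subset of size `q` whose negation is `R`-expanding, with
`p + q ≥ d + 2`. Cut the range `[α, β]` of the set into `ℓ` strips of width `u`; some strip holds
`ℓ ^ (d - 1)` points. The lowest strip lies at least `(ℓ - 1) u ≥ (R - 1) u` below `β`, so `β`
extends expanding subsets of it; symmetrically `α` extends the negated subsets of the highest
strip. An inner strip is cut again into `ℓ` strips of width `u / ℓ`: the fullest of them lies at
distance at least `u ≥ (R - 1) u / ℓ` from both `α` and `β`, so both kinds of subsets grow. For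
`d = 2n - 3` one of `p`, `q` is at least `n`.
-/

open Finset Pointwise

def IsExpanding (R : ℝ) (T : Finset ℝ) : Prop :=
  ∀ ⦃x⦄, x ∈ T → ∀ ⦃y⦄, y ∈ T → ∀ ⦃z⦄, z ∈ T → x < y → y < z → R * (y - x) ≤ z - x

def HasExpanding (R : ℝ) (S : Finset ℝ) (m : ℕ) : Prop :=
  ∃ T ⊆ S, m ≤ #T ∧ IsExpanding R T

variable {R : ℝ}

lemma isExpanding_of_card_le_two {T : Finset ℝ} (hT : #T ≤ 2) : IsExpanding R T := by
  intro x hx y hy z hz hxy hyz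
  have h3 : #({x, y, z} : Finset ℝ) = 3 :=
    card_eq_three.2 ⟨x, y, z, hxy.ne, (hxy.trans hyz).ne, hyz.ne, rfl⟩
  have := card_le_card (insert_subset hx (insert_subset hy (singleton_subset_iff.2 hz)))
  omega

lemma IsExpanding.insert_of_subset_Icc {T : Finset ℝ} {x w e : ℝ} (h : IsExpanding R T)
    (hR : 1 < R) (hw : 0 < w) (hTx : ↑T ⊆ Set.Icc x (x + w)) (hxe : x + R * w ≤ e) :
    IsExpanding R (insert e T) := by
  have hlt : ∀ y ∈ T, y < e := fun y hy => by nlinarith [(hTx hy).2]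
  have hle : ∀ y ∈ insert e T, y ≤ e := by
    intro y hy
    rcases mem_insert.1 hy with rfl | hy
    exacts [le_rfl, (hlt y hy).le]
  intro a ha b hb c hc hab hbc
  have hb' : b ∈ T := (mem_insert.1 hb).resolve_left fun hbe => by linarith [hle c hc]
  have ha' : a ∈ T := (mem_insert.1 ha).resolve_left fun hae => by linarith [hle b hb]
  rcases mem_insert.1 hc with rfl | hc
  · obtain ⟨hxa, -⟩ := hTx ha'
    obtain ⟨-, hbx⟩ := hTx hb'
    nlinarith
  · exact h ha' hb' hc hab hbc

lemma HasExpanding.mono {S S' : Finset ℝ} {m : ℕ} (h : HasExpanding R S' m) (hS' : S' ⊆ S) :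
    HasExpanding R S m :=
  let ⟨T, hTS', hmT, hT⟩ := h
  ⟨T, hTS'.trans hS', hmT, hT⟩

lemma hasExpanding_of_le_two {S : Finset ℝ} {m : ℕ} (hm : m ≤ 2) (hS : m ≤ #S) :
    HasExpanding R S m :=
  let ⟨T, hTS, hT⟩ := exists_subset_card_eq hS
  ⟨T, hTS, hT.ge, isExpanding_of_card_le_two (hT ▸ hm)⟩

lemma HasExpanding.insert_of_subset_Icc {S S' : Finset ℝ} {m : ℕ} {x w e : ℝ}
    (h : HasExpanding R S' m) (hS' : S' ⊆ S) (hR : 1 < R) (hw : 0 < w)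
    (hS'x : ↑S' ⊆ Set.Icc x (x + w)) (he : e ∈ S) (hxe : x + R * w ≤ e) :
    HasExpanding R S (m + 1) := by
  obtain ⟨T, hTS', hmT, hT⟩ := h
  have heT : e ∉ T := fun heT => by nlinarith [(hS'x (hTS' heT)).2]
  refine ⟨insert e T, insert_subset he (hTS'.trans hS'), ?_,
    hT.insert_of_subset_Icc hR hw ((coe_subset.2 hTS').trans hS'x) hxe⟩
  rw [card_insert_of_notMem heT]
  omega

lemma HasExpanding.neg_insert_of_subset_Icc {S S' : Finset ℝ} {m : ℕ} {x w e : ℝ}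
    (h : HasExpanding R (-S') m) (hS' : S' ⊆ S) (hR : 1 < R) (hw : 0 < w)
    (hS'x : ↑S' ⊆ Set.Icc x (x + w)) (he : e ∈ S) (hex : e + R * w ≤ x + w) :
    HasExpanding R (-S) (m + 1) := by
  refine h.insert_of_subset_Icc (neg_subset_neg hS') hR hw (x := -(x + w)) ?_ (neg_mem_neg he)
    (by linarith)
  rw [coe_neg, show -(x + w) + w = -x by ring, ← Set.neg_Icc]
  exact Set.neg_subset_neg.2 hS'x

lemma exists_subset_Icc_of_mul_le_card {S : Finset ℝ} {ℓ m : ℕ} {α u : ℝ} (hℓ : 0 < ℓ)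
    (hu : 0 < u) (hS : ↑S ⊆ Set.Icc α (α + ℓ * u)) (hcard : ℓ * m ≤ #S) :
    ∃ i < ℓ, ∃ S' ⊆ S, m ≤ #S' ∧ ↑S' ⊆ Set.Icc (α + i * u) (α + i * u + u) := by
  classical
  set f : ℝ → ℕ := fun y => min ⌊(y - α) / u⌋₊ (ℓ - 1)
  obtain ⟨i, hi, hfib⟩ := exists_le_card_fiber_of_mul_le_card_of_maps_to (f := f)
    (fun _ _ => mem_range.2 ((min_le_right _ _).trans_lt (by omega)))
    (nonempty_range_iff.2 hℓ.ne') (by simpa using hcard)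
  refine ⟨i, mem_range.1 hi, _, filter_subset _ _, hfib, fun y hy => ?_⟩
  obtain ⟨hyS, rfl⟩ := mem_filter.1 hy
  obtain ⟨hαy, hyαu⟩ := hS hyS
  have ht : 0 ≤ (y - α) / u := div_nonneg (by linarith) hu.le
  constructor
  · have : (f y : ℝ) ≤ (y - α) / u :=
      (Nat.cast_le.2 (min_le_left _ _)).trans (Nat.floor_le ht)
    rw [le_div_iff₀ hu] at this
    linarith
  · rcases min_choice ⌊(y - α) / u⌋₊ (ℓ - 1) with hfy | hfy <;> simp only [f, hfy]
    · have := Nat.lt_floor_add_one ((y - α) / u)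
      rw [div_lt_iff₀ hu] at this
      linarith
    · rw [Nat.cast_pred hℓ]
      linarith

def HasExpandingPair (R : ℝ) (S : Finset ℝ) (k : ℕ) : Prop :=
  ∃ p q, k ≤ p + q ∧ HasExpanding R S p ∧ HasExpanding R (-S) q

section Pair

variable {S S' : Finset ℝ} {k : ℕ} {x w e e' : ℝ}

lemma HasExpandingPair.insert_top (h : HasExpandingPair R S' k) (hS' : S' ⊆ S) (hR : 1 < R)
    (hw : 0 < w) (hS'x : ↑S' ⊆ Set.Icc x (x + w)) (he : e ∈ S) (hxe : x + R * w ≤ e) :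
    HasExpandingPair R S (k + 1) :=
  let ⟨p, q, hk, hA, hB⟩ := h
  ⟨p + 1, q, by omega, hA.insert_of_subset_Icc hS' hR hw hS'x he hxe,
    hB.mono (neg_subset_neg hS')⟩

lemma HasExpandingPair.insert_bot (h : HasExpandingPair R S' k) (hS' : S' ⊆ S) (hR : 1 < R)
    (hw : 0 < w) (hS'x : ↑S' ⊆ Set.Icc x (x + w)) (he : e ∈ S) (hex : e + R * w ≤ x + w) :
    HasExpandingPair R S (k + 1) :=
  let ⟨p, q, hk, hA, hB⟩ := h
  ⟨p, q + 1, by omega, hA.mono hS', hB.neg_insert_of_subset_Icc hS' hR hw hS'x he hex⟩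

lemma HasExpandingPair.insert_top_bot (h : HasExpandingPair R S' k) (hS' : S' ⊆ S)
    (hR : 1 < R) (hw : 0 < w) (hS'x : ↑S' ⊆ Set.Icc x (x + w)) (he : e ∈ S)
    (hxe : x + R * w ≤ e) (he' : e' ∈ S) (he'x : e' + R * w ≤ x + w) :
    HasExpandingPair R S (k + 2) :=
  let ⟨p, q, hk, hA, hB⟩ := h
  ⟨p + 1, q + 1, by omega, hA.insert_of_subset_Icc hS' hR hw hS'x he hxe,
    hB.neg_insert_of_subset_Icc hS' hR hw hS'x he' he'x⟩

end Pair

theorem hasExpandingPair_of_pow_le_card {ℓ : ℕ} (hR : 1 < R) (hRℓ : R ≤ ℓ) (d : ℕ) :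
    ∀ S : Finset ℝ, ℓ ^ d ≤ #S → HasExpandingPair R S (d + 2) := by
  have hℓ : 2 ≤ ℓ := by exact_mod_cast (show (1 : ℝ) < ℓ by linarith)
  induction d using Nat.twoStepInduction with
  | zero =>
    intro S hS
    have h1 : 1 ≤ #S := by simpa using hS
    exact ⟨1, 1, le_rfl, hasExpanding_of_le_two (by norm_num) h1,
      hasExpanding_of_le_two (by norm_num) (by rwa [card_neg])⟩
  | one =>
    intro S hS
    have h2 : 2 ≤ #S := hℓ.trans (by simpa using hS)
    exact ⟨2, 1, le_rfl, hasExpanding_of_le_two le_rfl h2,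
      hasExpanding_of_le_two (by norm_num) (by rw [card_neg]; omega)⟩
  | more d ih₀ ih₁ =>
    intro S hS
    have hS1 : 1 < #S := (by omega : 1 < ℓ).trans_le ((Nat.le_self_pow (by omega) _).trans hS)
    have hne : S.Nonempty := card_pos.1 (by omega)
    have hαS := min'_mem S hne
    have hβS := max'_mem S hne
    set α := S.min' hne
    set β := S.max' hne
    have hαβ : α < β := min'_lt_max'_of_card S hS1
    set v := (β - α) / ℓ / ℓ
    have hv : 0 < v := by positivity
    have hβ : β = α + ℓ * (ℓ * v) := by simp only [v]; field_simp; ring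
    have hSloc : ↑S ⊆ Set.Icc α (α + ℓ * (ℓ * v)) :=
      fun y hy => ⟨min'_le S y hy, hβ ▸ le_max' S y hy⟩
    obtain ⟨i, hi, S', hS'S, hcard', hS'loc⟩ := exists_subset_Icc_of_mul_le_card (by omega)
      (by positivity) hSloc (by rwa [← pow_succ'])
    obtain rfl | hi₀ := Nat.eq_zero_or_pos i
    · refine (ih₁ S' hcard').insert_top hS'S hR (by positivity) hS'loc hβS ?_
      rw [hβ, Nat.cast_zero]
      nlinarith
    obtain hiℓ | hiℓ := (Nat.succ_le_of_lt hi).eq_or_lt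
    · refine (ih₁ S' hcard').insert_bot hS'S hR (by positivity) hS'loc hαS ?_
      have : (i : ℝ) + 1 = ℓ := by exact_mod_cast hiℓ
      nlinarith
    · obtain ⟨j, hj, S'', hS''S', hcard'', hS''loc⟩ := exists_subset_Icc_of_mul_le_card
        (by omega) hv hS'loc (by rwa [← pow_succ'])
      have hi₁ : (1 : ℝ) ≤ i := by exact_mod_cast hi₀
      have hi₂ : (i : ℝ) + 2 ≤ ℓ := by exact_mod_cast hiℓ
      have hj₁ : (j : ℝ) + 1 ≤ ℓ := by exact_mod_cast hj
      refine (ih₀ S'' hcard'').insert_top_bot (hS''S'.trans hS'S) hR hv hS''loc hβS ?_ hαS ?_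
      · have : (i : ℝ) * ℓ + j + R ≤ ℓ * ℓ := by nlinarith
        rw [hβ]
        nlinarith [mul_le_mul_of_nonneg_right this hv.le]
      · have : R ≤ (i : ℝ) * ℓ + j + 1 := by nlinarith [(Nat.cast_nonneg j : (0 : ℝ) ≤ j)]
        nlinarith [mul_le_mul_of_nonneg_right this hv.le]

lemma HasExpanding.exists_strictMono {S : Finset ℝ} {m n : ℕ} (h : HasExpanding R S m)
    (hn : n ≤ m) : ∃ x : Fin n → ℝ, StrictMono x ∧ (∀ k, x k ∈ S) ∧
      ∀ i j l, i < j → j < l → R * (x j - x i) ≤ x l - x i := by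
  obtain ⟨T, hTS, hmT, hT⟩ := h
  obtain ⟨T', hT'T, hT'⟩ := exists_subset_card_eq (hn.trans hmT)
  set x := T'.orderEmbOfFin hT'
  have hxT : ∀ k, x k ∈ T := fun k => hT'T (orderEmbOfFin_mem T' hT' k)
  exact ⟨x, x.strictMono, fun k => hTS (hxT k),
    fun i j l hij hjl => hT (hxT i) (hxT j) (hxT l) (x.strictMono hij) (x.strictMono hjl)⟩

lemma exists_strictMono_comp_eq {α β γ : Type*} [Preorder α] [LinearOrder β] [Preorder γ]
    {a : β → γ} {x : α → γ} (ha : StrictMono a) (hx : StrictMono x)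
    (hxa : ∀ k, x k ∈ Set.range a) : ∃ φ : α → β, StrictMono φ ∧ ∀ k, a (φ k) = x k := by
  choose φ hφ using hxa
  exact ⟨φ, fun k k' h => ha.lt_iff_lt.1 (by rw [hφ, hφ]; exact hx h), hφ⟩

lemma le_two_pow_toNat_ceil_logb {R : ℝ} (hR : 0 < R) : R ≤ 2 ^ ⌈Real.logb 2 R⌉.toNat :=
  calc R = 2 ^ Real.logb 2 R := (Real.rpow_logb two_pos (by norm_num) hR).symm
    _ ≤ 2 ^ (⌈Real.logb 2 R⌉.toNat : ℝ) := Real.rpow_le_rpow_of_exponent_le one_le_two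
        ((Int.le_ceil _).trans (by exact_mod_cast Int.self_le_toNat _))
    _ = _ := Real.rpow_natCast _ _

lemma two_pow_pow_le_four_pow (r n : ℕ) : (2 ^ r) ^ (2 * n - 3) ≤ 4 ^ (r * (n - 1) + 1) := by
  rw [← pow_mul, show 4 = 2 ^ 2 by rfl, ← pow_mul]
  refine Nat.pow_le_pow_right two_pos ?_
  have := Nat.mul_le_mul_left r (show 2 * n - 3 ≤ 2 * (n - 1) by omega)
  nlinarith

theorem stmt11_general (n : ℕ) (R : ℝ) (hR : 1 < R) (N : ℕ)
    (hN : 4 ^ ((⌈Real.logb 2 R⌉.toNat) * (n - 1) + 1) ≤ N)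
    (a : Fin N → ℝ) (ha : StrictMono a) :
    ∃ φ : Fin n → Fin N, StrictMono φ ∧
      ((∀ i j l : Fin n, i < j → j < l →
          R * (a (φ j) - a (φ i)) ≤ a (φ l) - a (φ i)) ∨
       (∀ i j l : Fin n, i < j → j < l →
          R * (-(a (φ j.rev)) - (-(a (φ i.rev)))) ≤ -(a (φ l.rev)) - (-(a (φ i.rev))))) := by
  set r := ⌈Real.logb 2 R⌉.toNat
  have hRℓ : R ≤ ((2 ^ r : ℕ) : ℝ) := by
    push_cast
    exact le_two_pow_toNat_ceil_logb (by linarith)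
  have hS : (2 ^ r) ^ (2 * n - 3) ≤ #(univ.image a) := by
    rw [card_image_of_injective _ ha.injective, card_univ, Fintype.card_fin]
    exact (two_pow_pow_le_four_pow r n).trans hN
  obtain ⟨p, q, hpq, hA, hB⟩ := hasExpandingPair_of_pow_le_card hR hRℓ _ _ hS
  have hrange : ∀ y ∈ univ.image a, y ∈ Set.range a := by simp
  rcases le_or_gt n p with hp | hq
  · obtain ⟨x, hx, hxS, hxR⟩ := hA.exists_strictMono hp
    obtain ⟨φ, hφ, hax⟩ := exists_strictMono_comp_eq ha hx fun k => hrange _ (hxS k)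
    exact ⟨φ, hφ, Or.inl fun i j l hij hjl => by simpa only [hax] using hxR i j l hij hjl⟩
  · obtain ⟨y, hy, hyS, hyR⟩ := hB.exists_strictMono (n := n) (by omega)
    obtain ⟨φ, hφ, hay⟩ := exists_strictMono_comp_eq ha (x := fun k => -y k.rev)
      (fun k k' h => neg_lt_neg (hy (Fin.rev_lt_rev.2 h)))
      fun k => hrange _ (by simpa using neg_mem_neg (hyS k.rev))
    exact ⟨φ, hφ, Or.inr fun i j l hij hjl => by
      simpa only [hay, Fin.rev_rev, neg_neg] using hyR i j l hij hjl⟩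

/-- for `n ≥ 1`, `R > 1`, and `r := ⌈log₂ R⌉`, every strictly increasing
real sequence of length at least `4^(r·(n−1)+1)` has an `n`-term subsequence `b` such
that `b_k − b_i ≥ R·(b_j − b_i)` for all `i < j < k`, or the reversed negated sequence
`c := (−bₙ,…,−b₁)` satisfies the same condition. -/
theorem stmt11 (n : ℕ) (hn : 1 ≤ n) (R : ℝ) (hR : 1 < R) (N : ℕ)
    (hN : 4 ^ ((⌈Real.logb 2 R⌉.toNat) * (n - 1) + 1) ≤ N)
    (a : Fin N → ℝ) (ha : StrictMono a) :
    ∃ φ : Fin n → Fin N, StrictMono φ ∧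
      ((∀ i j l : Fin n, i < j → j < l →
          R * (a (φ j) - a (φ i)) ≤ a (φ l) - a (φ i)) ∨
       (∀ i j l : Fin n, i < j → j < l →
          R * (-(a (φ j.rev)) - (-(a (φ i.rev)))) ≤ -(a (φ l.rev)) - (-(a (φ i.rev))))) :=
  stmt11_general n R hR N hN a ha
end

section
/- Let Φ₁,…,Φ_r be k-ary predicates on ℝ^d and define the (r·k)-ary predicate Φ̄ on ℝ^d by Φ̄(x₁,…,x_{rk}) := there exists i ∈ {1,…,r} such that Φ_i(x_{j₁},…,x_{j_k}) holds for all indices 1 ≤ j₁ < ⋯ < j_k ≤ r·k. Then for every sequence (a₁,…,aₙ) of points of ℝ^d with n ≥ r·k: Φ̄ holds everywhere on (a₁,…,aₙ) if and only if there exists i ∈ {1,…,r} such that Φ_i holds everywhere on (a₁,…,aₙ). -/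
/-- A `k`-ary predicate `Φ` on `ℝ^d` holds everywhere on a sequence `a` of points of
`ℝ^d` if it holds on every increasing `k`-tuple of terms of `a`. -/
def HoldsEverywhereD {d k n : ℕ} (Φ : (Fin k → (Fin d → ℝ)) → Prop)
    (a : Fin n → (Fin d → ℝ)) : Prop :=
  ∀ i : Fin k → Fin n, StrictMono i → Φ (fun j => a (i j))

/-- for `k`-ary predicates `Φ₁,…,Φ_r` on `ℝ^d`, define the `(r·k)`-ary
predicate `Φ̄(x₁,…,x_{rk}) := ∃ i, Φ_i holds on every increasing k-tuple of
(x₁,…,x_{rk})`. Then for every sequence of length `n ≥ r·k`, `Φ̄` holds everywhere on it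
iff some `Φ_i` holds everywhere on it. -/
theorem stmt13 (d k r : ℕ) (Φ : Fin r → ((Fin k → (Fin d → ℝ)) → Prop))
    (n : ℕ) (hn : r * k ≤ n) (a : Fin n → (Fin d → ℝ)) :
    HoldsEverywhereD
      (fun x : Fin (r * k) → (Fin d → ℝ) => ∃ i, HoldsEverywhereD (Φ i) x) a ↔
    ∃ i, HoldsEverywhereD (Φ i) a := by
  constructor
  · intro H
    by_contra hc
    push_neg at hc
    have h : ∀ i, ∃ σ : Fin k → Fin n, StrictMono σ ∧ ¬ Φ i (fun j => a (σ j)) := by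
      intro i
      have := hc i
      unfold HoldsEverywhereD at this
      push_neg at this
      exact this
    choose t ht hΦt using h
    set S : Finset (Fin n) :=
      Finset.univ.biUnion (fun i => Finset.image (t i) Finset.univ) with hS
    have hScard : S.card ≤ r * k := by
      calc S.card ≤ ∑ i : Fin r, (Finset.image (t i) Finset.univ).card :=
            Finset.card_biUnion_le
        _ ≤ ∑ _i : Fin r, k := by
            apply Finset.sum_le_sum
            intro i _
            calc (Finset.image (t i) Finset.univ).card ≤ (Finset.univ : Finset (Fin k)).card :=
                  Finset.card_image_le
              _ = k := by simp
        _ = r * k := by simp [Finset.sum_const, mul_comm]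
    obtain ⟨T, hST, _, hTcard⟩ := Finset.exists_subsuperset_card_eq (S.subset_univ) hScard
      (by simpa using hn)
    set e := T.orderEmbOfFin hTcard with he
    obtain ⟨i, hi⟩ := H (fun j => e j) (by intro x y hxy; exact e.strictMono hxy)
    have hmem : ∀ j : Fin k, t i j ∈ T := by
      intro j
      apply hST
      simp only [hS, Finset.mem_biUnion]
      exact ⟨i, Finset.mem_univ i, Finset.mem_image_of_mem _ (Finset.mem_univ j)⟩
    have hex : ∀ j : Fin k, ∃ m : Fin (r * k), e m = t i j := by
      intro j
      have h1 : t i j ∈ (T : Set (Fin n)) := hmem j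
      rw [← Finset.range_orderEmbOfFin T hTcard] at h1
      exact h1
    choose m hm using hex
    have hmmono : StrictMono m := by
      intro x y hxy
      have : e (m x) < e (m y) := by rw [hm x, hm y]; exact ht i hxy
      exact e.lt_iff_lt.mp this
    have := hi m hmmono
    simp only [hm] at this
    exact hΦt i this
  · rintro ⟨i, hi⟩
    intro σ hσ
    exact ⟨i, fun j hj => hi (fun x => σ (j x)) (hσ.comp hj)⟩
end

section
/- For all positive integers d, k, D, n there exists N with the following property: for every set P of real polynomials in the d·k coordinates of k points of ℝ^d, each of total degree at most D, and every sequence (a₁,…,a_N) of N pairwise distinct points of ℝ^d such that p(a_{i₁},…,a_{i_k}) = 0 for every p ∈ P and all indices 1 ≤ i₁ < ⋯ < i_k ≤ N, there exists an n-element subset B of {a₁,…,a_N} such that p(b₁,…,b_k) = 0 for every p ∈ P and every k-tuple (b₁,…,b_k) ∈ B^k (with arbitrary order and repetitions allowed). -/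
/-!
Induction on `k`. Substituting a point `x` for the first of `k + 1` points turns each `p ∈ P`
into a polynomial of degree `≤ D` in `k` points. The substitutions of the points of an initial
segment of the sequence span a subspace of the space of polynomials of degree `≤ D`, whose
dimension `M` is finite; so if the sequence is cut into `M + 1` blocks, some block adds nothing to
the span of the substitutions of the earlier points. That span vanishes on the increasing
`k`-tuples of the block, so by induction it vanishes on all `k`-tuples of some `n` points of the
block, and since the substitution of every point of the block lies in the span, `P` vanishes on
all `(k + 1)`-tuples of these `n` points.
-/

open MvPolynomial Module

theorem MvPolynomial.totalDegree_aeval_le_mul {R σ τ : Type*} [CommSemiring R]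
    {g : σ → MvPolynomial τ R} {m : ℕ} (hg : ∀ i, (g i).totalDegree ≤ m)
    (p : MvPolynomial σ R) : (aeval g p).totalDegree ≤ p.totalDegree * m := by
  conv_lhs => rw [p.as_sum, map_sum]
  refine totalDegree_finsetSum_le fun s hs => ?_
  rw [aeval_monomial, ← Algebra.smul_def]
  calc (coeff s p • s.prod fun i e => g i ^ e).totalDegree
      ≤ (s.prod fun i e => g i ^ e).totalDegree := totalDegree_smul_le _ _
    _ ≤ ∑ i ∈ s.support, s i * m :=
        (totalDegree_finsetProd _ _).trans <| Finset.sum_le_sum fun i _ =>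
          (totalDegree_pow _ _).trans (Nat.mul_le_mul_left _ (hg i))
    _ = (s.sum fun _ e => e) * m := by rw [Finsupp.sum, Finset.sum_mul]
    _ ≤ p.totalDegree * m := Nat.mul_le_mul_right _ (le_totalDegree hs)

theorem Submodule.exists_succ_le_of_monotone {K V : Type*} [DivisionRing K] [AddCommGroup V]
    [Module K V] {W : Submodule K V} [FiniteDimensional K W] {U : ℕ → Submodule K V}
    (hU : Monotone U) (hUW : ∀ m, U m ≤ W) : ∃ i ≤ finrank K W, U (i + 1) ≤ U i := by
  by_contra! hstrict
  have hrank : ∀ i ≤ finrank K W + 1, i ≤ finrank K (U i) := by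
    intro i
    induction i with
    | zero => simp
    | succ i ih =>
      intro hi
      have : FiniteDimensional K (U (i + 1)) := Submodule.finiteDimensional_of_le (hUW _)
      have hlt := Submodule.finrank_lt_finrank_of_lt
        (lt_of_le_not_ge (hU (Nat.le_add_right i 1)) (hstrict i (by omega)))
      have := ih (by omega)
      omega
  have := hrank _ le_rfl
  have := Submodule.finrank_mono (hUW (finrank K W + 1))
  omega

section Substitution

variable {ι R : Type*} [CommSemiring R] {k : ℕ}

noncomputable def substHead (x : ι → R) :
    MvPolynomial (Fin (k + 1) × ι) R →ₐ[R] MvPolynomial (Fin k × ι) R :=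
  aeval fun v => Fin.cases (C (x v.2)) (fun i => X (i, v.2)) v.1

theorem eval_substHead (x : ι → R) (y : Fin k → ι → R) (q : MvPolynomial (Fin (k + 1) × ι) R) :
    eval (Function.uncurry y) (substHead x q) = eval (Function.uncurry (Fin.cons x y)) q := by
  rw [← aeval_eq_eval, ← aeval_eq_eval, substHead, comp_aeval_apply]
  congr 2
  funext ⟨i, j⟩
  cases i using Fin.cases <;> simp

theorem totalDegree_substHead_le (x : ι → R) (q : MvPolynomial (Fin (k + 1) × ι) R) :
    (substHead x q).totalDegree ≤ q.totalDegree := by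
  refine (totalDegree_aeval_le_mul (fun ⟨i, j⟩ => ?_) q).trans_eq (mul_one _)
  cases i using Fin.cases
  · simp
  · exact (totalDegree_monomial_le _ _).trans (by simp)

end Substitution

section Vanishing

variable {ι R α : Type*} [CommSemiring R] {k : ℕ}

def VanishesOn (Q : Set (MvPolynomial (Fin k × ι) R)) (B : Set (ι → R)) : Prop :=
  ∀ q ∈ Q, ∀ b : Fin k → ι → R, (∀ j, b j ∈ B) → eval (Function.uncurry b) q = 0

def VanishesOnIncreasing [Preorder α] (Q : Set (MvPolynomial (Fin k × ι) R)) (a : α → ι → R) :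
    Prop :=
  ∀ q ∈ Q, ∀ i : Fin k → α, StrictMono i → eval (Function.uncurry (a ∘ i)) q = 0

theorem VanishesOn.of_substHead {Q : Set (MvPolynomial (Fin (k + 1) × ι) R)}
    {Q' : Set (MvPolynomial (Fin k × ι) R)} {B : Set (ι → R)}
    (hQ : ∀ q ∈ Q, ∀ x ∈ B, substHead x q ∈ Q') (h : VanishesOn Q' B) : VanishesOn Q B := by
  intro q hq b hb
  rw [← Fin.cons_self_tail b, ← eval_substHead]
  exact h _ (hQ q hq _ (hb 0)) _ fun j => hb j.succ

noncomputable def headSpan (Q : Set (MvPolynomial (Fin (k + 1) × ι) R)) (a : α → ι → R)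
    (T : Set α) : Submodule R (MvPolynomial (Fin k × ι) R) :=
  Submodule.span R (Set.image2 (fun s q => substHead (a s) q) T Q)

theorem headSpan_le_restrictTotalDegree {Q : Set (MvPolynomial (Fin (k + 1) × ι) R)} {D : ℕ}
    (hQ : ∀ q ∈ Q, q.totalDegree ≤ D) (a : α → ι → R) (T : Set α) :
    headSpan Q a T ≤ restrictTotalDegree (Fin k × ι) R D :=
  Submodule.span_le.2 <| Set.image2_subset_iff.2 fun _ _ q hq =>
    (mem_restrictTotalDegree _ _ _).2 ((totalDegree_substHead_le _ q).trans (hQ q hq))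

theorem VanishesOnIncreasing.headSpan_comp {β : Type*} [Preorder α] [Preorder β]
    {Q : Set (MvPolynomial (Fin (k + 1) × ι) R)} {a : α → ι → R} (h : VanishesOnIncreasing Q a)
    {T : Set α} {e : β → α} (he : StrictMono e) (hT : ∀ s ∈ T, ∀ j, s < e j) :
    VanishesOnIncreasing (headSpan Q a T : Set (MvPolynomial (Fin k × ι) R)) (a ∘ e) := by
  intro r hr i hi
  suffices headSpan Q a T ≤ LinearMap.ker (aeval (Function.uncurry (a ∘ e ∘ i))).toLinearMap from
    this hr
  refine Submodule.span_le.2 (Set.image2_subset_iff.2 fun s hs q hq => ?_)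
  rw [SetLike.mem_coe, LinearMap.mem_ker, AlgHom.toLinearMap_apply, aeval_eq_eval,
    eval_substHead, ← Fin.comp_cons]
  exact h q hq _ (Fin.strictMono_cons.2 ⟨fun j => hT s hs _, he.comp hi⟩)

end Vanishing

theorem exists_headSpan_stable_block {ι K : Type*} [Finite ι] [Field K] {k D L N : ℕ}
    {Q : Set (MvPolynomial (Fin (k + 1) × ι) K)} (hQ : ∀ q ∈ Q, q.totalDegree ≤ D)
    (a : Fin N → ι → K) (hN : (finrank K (restrictTotalDegree (Fin k × ι) K D) + 1) * L ≤ N) :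
    ∃ o, o + L ≤ N ∧ headSpan Q a {s | (s : ℕ) < o + L} ≤ headSpan Q a {s | (s : ℕ) < o} := by
  set U : ℕ → Submodule K (MvPolynomial (Fin k × ι) K) :=
    fun m => headSpan Q a {s | (s : ℕ) < m * L}
  have hU : Monotone U := fun m m' h =>
    Submodule.span_mono <| Set.image2_subset_right fun s (hs : (s : ℕ) < m * L) =>
      show (s : ℕ) < m' * L from hs.trans_le (Nat.mul_le_mul_right _ h)
  obtain ⟨i, hi, hstable⟩ :=
    Submodule.exists_succ_le_of_monotone hU (fun m => headSpan_le_restrictTotalDegree hQ a _)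
  have hblock : i * L + L = (i + 1) * L := by ring
  refine ⟨i * L, ?_, by rwa [hblock]⟩
  calc i * L + L = (i + 1) * L := hblock
    _ ≤ _ := Nat.mul_le_mul_right _ (by omega)
    _ ≤ N := hN

noncomputable def vanishingBound (ι K : Type*) [Field K] (D : ℕ) : ℕ → ℕ → ℕ
  | 0, n => n
  | k + 1, n => (finrank K (restrictTotalDegree (Fin k × ι) K D) + 1) * vanishingBound ι K D k n

theorem exists_card_eq_vanishesOn_of_vanishesOnIncreasing {ι K : Type*} [Finite ι] [Field K]
    (D : ℕ) : ∀ {k n N : ℕ}, vanishingBound ι K D k n ≤ N →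
      ∀ {Q : Set (MvPolynomial (Fin k × ι) K)}, (∀ q ∈ Q, q.totalDegree ≤ D) →
      ∀ {a : Fin N → ι → K}, VanishesOnIncreasing Q a →
      ∃ S : Finset (Fin N), S.card = n ∧ VanishesOn Q (a '' S)
  | 0, n, N, hN, Q, _, a, ha => by
    have hn : n ≤ (Finset.univ : Finset (Fin N)).card := by
      rw [Finset.card_univ, Fintype.card_fin]
      exact hN
    obtain ⟨S, -, hS⟩ := Finset.exists_subset_card_eq hn
    refine ⟨S, hS, fun q hq b _ => ?_⟩
    rw [Subsingleton.elim (Function.uncurry b) (Function.uncurry (a ∘ Fin.elim0))]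
    exact ha q hq _ fun i => i.elim0
  | k + 1, n, N, hN, Q, hQ, a, ha => by
    obtain ⟨o, hoN, hstable⟩ := exists_headSpan_stable_block hQ a hN
    let e : Fin (vanishingBound ι K D k n) ↪o Fin N :=
      (Fin.natAddOrderEmb o).trans (Fin.castLEOrderEmb hoN)
    have he : ∀ j, (e j : ℕ) = o + j := fun j => rfl
    obtain ⟨S, hS, hvan⟩ := exists_card_eq_vanishesOn_of_vanishesOnIncreasing D le_rfl
      (fun r hr => (mem_restrictTotalDegree _ _ _).1 (headSpan_le_restrictTotalDegree hQ a _ hr))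
      (ha.headSpan_comp e.strictMono fun s (hs : (s : ℕ) < o) j => by
        rw [Fin.lt_def, he]; omega)
    refine ⟨S.map e.toEmbedding, by rw [Finset.card_map, hS], ?_⟩
    rw [Finset.coe_map, RelEmbedding.coe_toEmbedding, ← Set.image_comp]
    refine hvan.of_substHead fun q hq x ⟨j, _, hj⟩ => hstable ?_
    rw [← hj]
    refine Submodule.subset_span (Set.mem_image2_of_mem ?_ hq)
    show (e j : ℕ) < o + vanishingBound ι K D k n
    rw [he]
    omega

theorem stmt15_general (d k D n : ℕ) :
    ∃ N : ℕ, ∀ P : Set (MvPolynomial (Fin k × Fin d) ℝ),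
      (∀ p ∈ P, p.totalDegree ≤ D) →
      ∀ a : Fin N → Fin d → ℝ, Function.Injective a →
      (∀ p ∈ P, ∀ i : Fin k → Fin N, StrictMono i →
        MvPolynomial.eval (fun v => a (i v.1) v.2) p = 0) →
      ∃ B : Finset (Fin d → ℝ), B.card = n ∧ ↑B ⊆ Set.range a ∧
        ∀ p ∈ P, ∀ b : Fin k → Fin d → ℝ, (∀ i, b i ∈ B) →
          MvPolynomial.eval (fun v => b v.1 v.2) p = 0 := by
  refine ⟨vanishingBound (Fin d) ℝ D k n, fun P hP a ha hvan => ?_⟩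
  obtain ⟨S, hS, hSvan⟩ := exists_card_eq_vanishesOn_of_vanishesOnIncreasing D le_rfl hP hvan
  refine ⟨S.image a, by rw [Finset.card_image_of_injective _ ha, hS], ?_, ?_⟩
  · simp
  · rw [← Finset.coe_image] at hSvan
    exact hSvan

/-- for all positive `d, k, D, n` there is `N` such that whenever a set
`P` of polynomials in the `d·k` coordinates of `k` points of `ℝ^d`, all of total degree
at most `D`, vanishes on every increasing `k`-tuple of a sequence of `N` pairwise
distinct points of `ℝ^d`, there is an `n`-element subset `B` of the terms of the
sequence such that every `p ∈ P` vanishes on every `k`-tuple of `B` (arbitrary order,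
repetitions allowed). -/
theorem stmt15 (d k D n : ℕ) (hd : 0 < d) (hk : 0 < k) (hD : 0 < D) (hn : 0 < n) :
    ∃ N : ℕ, ∀ P : Set (MvPolynomial (Fin k × Fin d) ℝ),
      (∀ p ∈ P, p.totalDegree ≤ D) →
      ∀ a : Fin N → Fin d → ℝ, Function.Injective a →
      (∀ p ∈ P, ∀ i : Fin k → Fin N, StrictMono i →
        MvPolynomial.eval (fun v => a (i v.1) v.2) p = 0) →
      ∃ B : Finset (Fin d → ℝ), B.card = n ∧ ↑B ⊆ Set.range a ∧
        ∀ p ∈ P, ∀ b : Fin k → Fin d → ℝ, (∀ i, b i ∈ B) →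
          MvPolynomial.eval (fun v => b v.1 v.2) p = 0 :=
  stmt15_general d k D n
end
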